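/- arXiv:math/0409331 — 8 statements merged into one kernel-verified Lean document; each statement's English description precedes it below -/
import Mathlib

section
/- If d1 and d2 are relatively prime positive integers greater than 1, then every positive integer not divisible by d1 or d2 is representable either in the form x*d1 + y*d2 with x, y positive integers, or in the form d1*d2 - p*d1 - q*d2 with p, q positive integers. -/
theorem stmt0 (d1 d2 : ℕ) (h1 : 1 < d1) (h2 : 1 < d2)
    (hcop : Nat.Coprime d1 d2) (s : ℕ) (hs : 0 < s)
    (hnd1 : ¬ d1 ∣ s) (hnd2 : ¬ d2 ∣ s) :
    (∃ x y : ℕ, 0 < x ∧ 0 < y ∧ s = x * d1 + y * d2) ∨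
    (∃ p q : ℕ, 0 < p ∧ 0 < q ∧ (s : ℤ) = d1 * d2 - p * d1 - q * d2) := by
  have hd2 : (0:ℤ) < d2 := by exact_mod_cast Nat.lt_of_lt_of_le Nat.zero_lt_one h2.le
  obtain ⟨a, b, hab⟩ : ∃ a b : ℤ, a * d1 + b * d2 = 1 := by
    have hc : IsCoprime (d1:ℤ) (d2:ℤ) := by
      rw [Int.isCoprime_iff_gcd_eq_one]
      simpa [Int.gcd] using hcop
    obtain ⟨u, v, huv⟩ := hc
    exact ⟨u, v, by linarith⟩
  set x0 : ℤ := (s * a) % d2 with hx0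
  have hx0nonneg : 0 ≤ x0 := Int.emod_nonneg _ (by positivity)
  have hx0lt : x0 < d2 := Int.emod_lt_of_pos _ hd2
  have hsub : (s:ℤ) * a - x0 = d2 * ((s * a) / d2) := by
    rw [hx0, Int.emod_def]; ring
  have hdvd : (d2:ℤ) ∣ (s:ℤ) - x0 * d1 := by
    have : (s:ℤ) - x0 * d1 = ((s:ℤ) * a - x0) * d1 + (s * b) * d2 := by
      have := hab
      nlinarith [hab]
    rw [this, hsub]
    exact dvd_add ⟨(s * a) / d2 * d1, by ring⟩ ⟨s * b, by ring⟩
  obtain ⟨y, hy⟩ := hdvd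
  have hy' : (s:ℤ) = x0 * d1 + y * d2 := by linarith [hy]
  have hx0ne : x0 ≠ 0 := by
    intro h
    apply hnd2
    have : (d2:ℤ) ∣ (s:ℤ) := ⟨y, by rw [hy']; rw [h]; ring⟩
    exact_mod_cast this
  have hx0pos : 0 < x0 := lt_of_le_of_ne hx0nonneg (Ne.symm hx0ne)
  by_cases hypos : 0 < y
  · left
    refine ⟨x0.toNat, y.toNat, ?_, ?_, ?_⟩
    · omega
    · omega
    · have : (s:ℤ) = (x0.toNat : ℤ) * d1 + (y.toNat : ℤ) * d2 := by
        rw [Int.toNat_of_nonneg hx0nonneg, Int.toNat_of_nonneg hypos.le]; exact hy'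
      exact_mod_cast this
  · right
    have hyne : y ≠ 0 := by
      intro h
      apply hnd1
      have : (d1:ℤ) ∣ (s:ℤ) := ⟨x0, by rw [hy', h]; ring⟩
      exact_mod_cast this
    have hyneg : y ≤ -1 := by omega
    refine ⟨(d2 - x0).toNat, (-y).toNat, by omega, by omega, ?_⟩
    rw [Int.toNat_of_nonneg (by omega : (0:ℤ) ≤ d2 - x0),
        Int.toNat_of_nonneg (by omega : (0:ℤ) ≤ -y)]
    push_cast
    linarith [hy']
end

section
/- Let 2 < d1 < d2 with gcd(d1, d2) = 1. An integer t is not representable as a nonnegative integer combination of d1 and d2 if and only if t = d1*d2 - p*d1 - q*d2 for some integers p, q with 1 ≤ p ≤ ⌊d2 - d2/d1⌋ and 1 ≤ q ≤ d1 - 1; moreover this representation is unique. -/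
/-- The floor condition is equivalent to an integer linear inequality. -/
lemma floor_cond (d1 d2 p : ℤ) (hd1 : 0 < d1) :
    p ≤ ⌊(d2 : ℚ) - (d2 : ℚ) / (d1 : ℚ)⌋ ↔ p * d1 + d2 ≤ d1 * d2 := by
  have hd : (0:ℚ) < (d1:ℚ) := by exact_mod_cast hd1
  rw [Int.le_floor, le_sub_comm, div_le_iff₀ hd]
  have hcast : ((d2:ℚ) - (p:ℚ)) * (d1:ℚ) = (((d2 - p) * d1 : ℤ) : ℚ) := by push_cast; ring
  rw [hcast]
  rw [show ((d2:ℚ) = ((d2 : ℤ) : ℚ)) from rfl, Int.cast_le]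
  constructor <;> intro h <;> nlinarith [h]

/-- Numbers of the given form are not representable. -/
lemma not_rep (d1 d2 : ℤ) (h1 : 2 < d1) (h12 : d1 < d2) (hcop : IsCoprime d1 d2)
    (p q : ℤ) (hp : 1 ≤ p) (hq1 : 1 ≤ q) (hq2 : q ≤ d1 - 1) :
    ¬ ∃ a b : ℕ, d1 * d2 - p * d1 - q * d2 = a * d1 + b * d2 := by
  rintro ⟨a, b, hab⟩
  have key : ((a:ℤ) + p) * d1 = (d1 - q - (b:ℤ)) * d2 := by linear_combination -hab
  have hdvd : d2 ∣ ((a:ℤ) + p) := by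
    refine (hcop.symm.dvd_of_dvd_mul_right ⟨d1 - q - (b:ℤ), ?_⟩)
    linear_combination key
  have ha0 : (0:ℤ) ≤ (a:ℤ) := Int.natCast_nonneg a
  have hb0 : (0:ℤ) ≤ (b:ℤ) := Int.natCast_nonneg b
  have hpos : 0 < (a:ℤ) + p := by linarith
  have hrpos : 0 < d1 - q - (b:ℤ) := by nlinarith [key]
  have hlt : (a:ℤ) + p < d2 := by nlinarith [key]
  have := Int.le_of_dvd hpos hdvd
  linarith

/-- Uniqueness of the representation. -/
lemma uniq_rep (d1 d2 : ℤ) (h1 : 2 < d1) (hcop : IsCoprime d1 d2)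
    (p q p' q' : ℤ) (hq1 : 1 ≤ q) (hq2 : q ≤ d1 - 1) (hq1' : 1 ≤ q') (hq2' : q' ≤ d1 - 1)
    (he : d1 * d2 - p * d1 - q * d2 = d1 * d2 - p' * d1 - q' * d2) :
    p = p' ∧ q = q' := by
  have key : (p' - p) * d1 = (q - q') * d2 := by linear_combination he
  have hd : d1 ∣ (q - q') := by
    refine hcop.dvd_of_dvd_mul_right ⟨p' - p, ?_⟩
    linear_combination -key
  have hqq : q - q' = 0 := by
    refine Int.eq_zero_of_abs_lt_dvd hd ?_
    rw [abs_sub_lt_iff]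
    constructor <;> linarith
  have hq : q = q' := by linarith
  have : (p' - p) * d1 = 0 := by rw [key, hqq]; ring
  have hp : p' - p = 0 := by
    rcases mul_eq_zero.mp this with h | h
    · exact h
    · exfalso; omega
  exact ⟨by linarith, hq⟩

theorem stmt1 (d1 d2 : ℤ) (h1 : 2 < d1) (h12 : d1 < d2) (hcop : IsCoprime d1 d2)
    (t : ℤ) (ht : 0 < t) :
    (¬ ∃ a b : ℕ, t = a * d1 + b * d2) ↔
    (∃! pq : ℤ × ℤ,
      1 ≤ pq.1 ∧ pq.1 ≤ ⌊(d2 : ℚ) - (d2 : ℚ) / (d1 : ℚ)⌋ ∧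
      1 ≤ pq.2 ∧ pq.2 ≤ d1 - 1 ∧
      t = d1 * d2 - pq.1 * d1 - pq.2 * d2) := by
  have hd1 : (0:ℤ) < d1 := by linarith
  have hd2 : (0:ℤ) < d2 := by linarith
  constructor
  · intro hnr
    obtain ⟨u, v, huv⟩ := id hcop
    set a := (t * u) % d2 with ha
    have ha0 : 0 ≤ a := Int.emod_nonneg _ (by linarith)
    have ha2 : a < d2 := Int.emod_lt_of_pos _ hd2
    have hdvd : d2 ∣ (t - a * d1) := by
      have h2 : t - a * d1 = t * v * d2 + (t * u - a) * d1 := by linear_combination (-t) * huv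
      rw [h2]
      refine dvd_add (dvd_mul_left d2 (t * v)) (dvd_mul_of_dvd_left ?_ d1)
      rw [ha]
      exact Int.dvd_self_sub_of_emod_eq rfl
    obtain ⟨y, hy⟩ := hdvd
    by_cases hy0 : 0 ≤ y
    · exfalso; apply hnr
      refine ⟨a.toNat, y.toNat, ?_⟩
      push_cast [Int.toNat_of_nonneg ha0, Int.toNat_of_nonneg hy0]
      linarith
    · push_neg at hy0
      have hy1 : y ≤ -1 := by linarith
      have hteq : t = d1 * d2 - (d2 - a) * d1 - (-y) * d2 := by linear_combination hy
      have hc1 : (1:ℤ) ≤ d2 - a := by linarith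
      have hc2 : d2 - a ≤ ⌊(d2 : ℚ) - (d2 : ℚ) / (d1 : ℚ)⌋ := by
        rw [floor_cond d1 d2 _ hd1]
        nlinarith [hteq]
      have hc3 : (1:ℤ) ≤ -y := by linarith
      have hc4 : -y ≤ d1 - 1 := by nlinarith [hteq]
      refine ⟨(d2 - a, -y), ⟨hc1, hc2, hc3, hc4, hteq⟩, ?_⟩
      rintro ⟨p', q'⟩ ⟨hp1, hp2, hq1, hq2, heq⟩
      have heq' : d1 * d2 - p' * d1 - q' * d2 = d1 * d2 - (d2 - a) * d1 - (-y) * d2 := by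
        linarith [heq, hteq]
      have huq := uniq_rep d1 d2 h1 hcop p' q' (d2 - a) (-y) hq1 hq2 hc3 hc4 heq'
      simp only [Prod.mk.injEq]
      exact huq
  · rintro ⟨⟨p, q⟩, ⟨hp1, hp2, hq1, hq2, heq⟩, _⟩ ⟨a, b, hab⟩
    exact not_rep d1 d2 h1 h12 hcop p q hp1 hq1 hq2 ⟨a, b, by linarith⟩
end

section
/- For coprime integers d1, d2 with 1 < d1 < d2, the number of positive integers unrepresentable as nonnegative integer combinations of d1 and d2 equals (d1 - 1)(d2 - 1)/2. -/
/-- Canonical representation: every integer is `a*m + b*n` with `0 ≤ a < n`. -/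
lemma syl_canon (m n : ℤ) (hn : 0 < n) (cop : IsCoprime m n) (x : ℤ) :
    ∃ a b : ℤ, 0 ≤ a ∧ a < n ∧ x = a * m + b * n := by
  obtain ⟨u, v, huv⟩ := cop
  refine ⟨(x*u) % n, ((x*u)/n) * m + x * v, Int.emod_nonneg _ hn.ne',
    Int.emod_lt_of_pos _ hn, ?_⟩
  have h := Int.emod_add_mul_ediv (x*u) n
  linear_combination (-m) * h - x * huv

/-- If `x = a*m + b*n` with `0 ≤ a < n` and `b < 0`, then `x` is unrepresentable. -/
lemma syl_unrep (m n : ℤ) (hm : 0 < m) (hn : 0 < n) (cop : IsCoprime m n)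
    (a b : ℤ) (ha0 : 0 ≤ a) (ha : a < n) (hb : b < 0) :
    ¬ ∃ a' b' : ℤ, 0 ≤ a' ∧ 0 ≤ b' ∧ a * m + b * n = a' * m + b' * n := by
  rintro ⟨a', b', ha', hb', heq⟩
  have h : (a - a') * m = (b' - b) * n := by linear_combination heq
  have hdvd : n ∣ (a - a') := by
    have hd : n ∣ (a - a') * m := ⟨b' - b, by linarith [h]⟩
    exact (cop.symm).dvd_of_dvd_mul_right hd
  have h1 : 0 < a - a' := by nlinarith
  have := Int.le_of_dvd h1 hdvd
  linarith

/-- Symmetry: `x` representable iff `m*n - m - n - x` is not. -/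
lemma syl_sym (m n : ℤ) (hm : 0 < m) (hn : 0 < n) (cop : IsCoprime m n) (x : ℤ) :
    (∃ a b : ℤ, 0 ≤ a ∧ 0 ≤ b ∧ x = a * m + b * n) ↔
      ¬ (∃ a b : ℤ, 0 ≤ a ∧ 0 ≤ b ∧ m * n - m - n - x = a * m + b * n) := by
  obtain ⟨a, b, ha0, ha, hx⟩ := syl_canon m n hn cop x
  have hx' : m * n - m - n - x = (n - 1 - a) * m + (-1 - b) * n := by
    rw [hx]; ring
  constructor
  · intro hQ
    have hb : 0 ≤ b := by
      by_contra hbneg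
      exact syl_unrep m n hm hn cop a b ha0 ha (by linarith) (by rw [← hx]; exact hQ)
    rw [hx']
    exact syl_unrep m n hm hn cop (n - 1 - a) (-1 - b) (by linarith) (by linarith)
      (by linarith)
  · intro hnQ
    have hb : 0 ≤ b := by
      by_contra hbneg
      exact hnQ ⟨n - 1 - a, -1 - b, by linarith, by linarith, hx'⟩
    exact ⟨a, b, ha0, hb, hx⟩

theorem stmt3 (d1 d2 : ℕ) (h1 : 1 < d1) (h12 : d1 < d2) (hcop : Nat.Coprime d1 d2) :
    Nat.card {n : ℕ | ¬ ∃ a b : ℕ, n = a * d1 + b * d2} = (d1 - 1) * (d2 - 1) / 2 := by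
  classical
  have h2 : 1 < d2 := h1.trans h12
  have hm : (0:ℤ) < (d1:ℤ) := by exact_mod_cast Nat.lt_of_lt_of_le Nat.zero_lt_one h1.le
  have hn : (0:ℤ) < (d2:ℤ) := by exact_mod_cast Nat.lt_of_lt_of_le Nat.zero_lt_one h2.le
  have cop : IsCoprime (d1:ℤ) (d2:ℤ) := Nat.isCoprime_iff_coprime.mpr hcop
  set p : ℕ → Prop := fun n => ∃ a b : ℕ, n = a * d1 + b * d2 with hp
  -- nat ↔ int representability
  have rep_iff : ∀ x : ℕ, p x ↔ ∃ a b : ℤ, 0 ≤ a ∧ 0 ≤ b ∧ (x:ℤ) = a * d1 + b * d2 := by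
    intro x
    constructor
    · rintro ⟨a, b, rfl⟩
      exact ⟨a, b, Int.natCast_nonneg a, Int.natCast_nonneg b, by push_cast; ring⟩
    · rintro ⟨a, b, ha, hb, h⟩
      refine ⟨a.toNat, b.toNat, ?_⟩
      have : (x:ℤ) = ((a.toNat * d1 + b.toNat * d2 : ℕ) : ℤ) := by
        push_cast [Int.toNat_of_nonneg ha, Int.toNat_of_nonneg hb]
        exact h
      exact_mod_cast this
  have hsum : d1 + d2 ≤ d1 * d2 := Nat.add_le_mul h1 h2
  set F : ℕ := d1 * d2 - d1 - d2 with hFdef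
  have hFcast : (F:ℤ) = (d1:ℤ) * d2 - d1 - d2 := by
    have h1' : d1 ≤ d1 * d2 := Nat.le_mul_of_pos_right _ (by omega)
    push_cast [hFdef, Nat.sub_sub]
    omega
  -- key symmetry on naturals
  have key : ∀ x : ℕ, x ≤ F → (p x ↔ ¬ p (F - x)) := by
    intro x hx
    have hcast : ((F - x : ℕ) : ℤ) = (d1:ℤ) * d2 - d1 - d2 - x := by
      push_cast [hx]
      omega
    rw [rep_iff, rep_iff, hcast]
    exact syl_sym _ _ hm hn cop x
  -- everything above F is representable
  have big : ∀ x : ℕ, F < x → p x := by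
    intro x hx
    rw [rep_iff]
    rw [syl_sym (d1:ℤ) d2 hm hn cop]
    rintro ⟨a, b, ha, hb, h⟩
    have hxz : (F:ℤ) < x := by exact_mod_cast hx
    nlinarith [hFcast]
  set T : Finset ℕ := (Finset.range (F+1)).filter (fun n => ¬ p n) with hT
  have hset : {n : ℕ | ¬ p n} = ↑T := by
    ext x
    constructor
    · intro hx
      have hx' : ¬ p x := hx
      simp only [hT, Finset.mem_coe, Finset.mem_filter, Finset.mem_range]
      refine ⟨?_, hx'⟩
      by_contra hbig
      exact hx' (big x (by omega))
    · intro hx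
      simp only [hT, Finset.mem_coe, Finset.mem_filter, Finset.mem_range] at hx
      exact hx.2
  have hcard : Nat.card {n : ℕ | ¬ p n} = T.card := by
    rw [hset, Nat.card_coe_set_eq, Set.ncard_coe_finset]
  -- bijection between unrepresentable and representable in [0, F]
  have hbij : T.card = ((Finset.range (F+1)).filter p).card := by
    apply Finset.card_bij (fun n _ => F - n)
    · intro a ha
      simp only [hT, Finset.mem_filter, Finset.mem_range] at ha ⊢
      refine ⟨by omega, ?_⟩
      have hk := key (F - a) (by omega)
      have h2' : F - (F - a) = a := by omega
      rw [h2'] at hk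
      exact hk.mpr ha.2
    · intro a ha b hb h
      simp only [hT, Finset.mem_filter, Finset.mem_range] at ha hb
      omega
    · intro b hb
      simp only [hT, Finset.mem_filter, Finset.mem_range] at hb ⊢
      refine ⟨F - b, ⟨by omega, ?_⟩, by omega⟩
      exact (key b (by omega)).mp hb.2
  have hsplit : T.card + ((Finset.range (F+1)).filter p).card = F + 1 := by
    rw [hT, add_comm, Finset.card_filter_add_card_filter_not, Finset.card_range]
  have hFodd : F + 1 = (d1 - 1) * (d2 - 1) := by
    have : ((d1:ℤ) - 1) * ((d2:ℤ) - 1) = (F:ℤ) + 1 := by rw [hFcast]; ring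
    have h1' : ((d1 - 1) * (d2 - 1) : ℕ) = ((F:ℤ) + 1) := by
      push_cast [Nat.succ_le_of_lt h1, h1.le, h2.le]
      linarith [this]
    exact_mod_cast h1'.symm
  have hfin : Nat.card {n : ℕ | ¬ ∃ a b : ℕ, n = a * d1 + b * d2} = T.card := hcard
  rw [hfin]
  omega
end

section
/- Under the standard form conditions for a non-symmetric 3-generated numerical semigroup (all off-diagonal a_ij ≥ 1, column sums a11 = a21 + a31 etc., and determinant conditions yielding d1, d2, d3), it is impossible that a11 = a22 = a33 = 2; consequently a11*a22*a33 ≥ 12. -/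
theorem stmt11 (d1 d2 d3 : ℕ)
    (a11 a12 a13 a21 a22 a23 a31 a32 a33 : ℕ)
    (hd1 : 1 < d1) (h12 : d1 < d2) (h23 : d2 < d3)
    (hmin1 : ¬ ∃ b c : ℕ, d1 = b * d2 + c * d3)
    (hmin2 : ¬ ∃ a c : ℕ, d2 = a * d1 + c * d3)
    (hmin3 : ¬ ∃ a b : ℕ, d3 = a * d1 + b * d2)
    (hoff : 1 ≤ a12 ∧ 1 ≤ a13 ∧ 1 ≤ a21 ∧ 1 ≤ a23 ∧ 1 ≤ a31 ∧ 1 ≤ a32)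
    (hdiag : 2 ≤ a11 ∧ 2 ≤ a22 ∧ 2 ≤ a33)
    (hr1 : a11 * d1 = a12 * d2 + a13 * d3)
    (hr2 : a22 * d2 = a21 * d1 + a23 * d3)
    (hr3 : a33 * d3 = a31 * d1 + a32 * d2)
    (hc1 : a11 = a21 + a31) (hc2 : a22 = a12 + a32) (hc3 : a33 = a13 + a23) :
    ¬ (a11 = 2 ∧ a22 = 2 ∧ a33 = 2) ∧ 12 ≤ a11 * a22 * a33 := by
  obtain ⟨o1, o2, o3, o4, o5, o6⟩ := hoff
  obtain ⟨e1, e2, e3⟩ := hdiag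
  have key : ¬ (a11 = 2 ∧ a22 = 2 ∧ a33 = 2) := by
    rintro ⟨h1, h2, h3⟩
    have ha12 : a12 = 1 := by omega
    have ha13 : a13 = 1 := by omega
    rw [h1, ha12, ha13] at hr1
    omega
  refine ⟨key, ?_⟩
  have h3 : 3 ≤ a11 ∨ 3 ≤ a22 ∨ 3 ≤ a33 := by
    by_contra h; push_neg at h; exact key ⟨by omega, by omega, by omega⟩
  rcases h3 with h | h | h
  · calc 12 = 3 * 2 * 2 := rfl
      _ ≤ a11 * a22 * a33 := Nat.mul_le_mul (Nat.mul_le_mul h e2) e3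
  · calc 12 = 2 * 3 * 2 := rfl
      _ ≤ a11 * a22 * a33 := Nat.mul_le_mul (Nat.mul_le_mul e1 h) e3
  · calc 12 = 2 * 2 * 3 := rfl
      _ ≤ a11 * a22 * a33 := Nat.mul_le_mul (Nat.mul_le_mul e1 e2) h
end

section
/- For a non-symmetric numerical semigroup S(d1,d2,d3) with first minimal relation matrix in standard form, the Frobenius number satisfies F(d1,d2,d3) + d1 + d2 + d3 = a11*a22*a33 + max{a12*a23*a31, a13*a32*a21}. -/
/-- Reduction of a nonnegative combination of d2, d3 into the "L-shaped" staircase region,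
changing the value only by a multiple of d1. -/
private lemma red_aux (d1 d2 d3 a11 a12 a13 a21 a22 a23 a31 a32 a33 : ℕ)
    (hd1 : 0 < d1) (hd2 : 0 < d2) (hd3 : 0 < d3)
    (h12 : 1 ≤ a12) (h21 : 1 ≤ a21) (h31 : 1 ≤ a31)
    (ha22 : 0 < a22) (ha33 : 0 < a33)
    (hr1 : a11 * d1 = a12 * d2 + a13 * d3)
    (hr2 : a22 * d2 = a21 * d1 + a23 * d3)
    (hr3 : a33 * d3 = a31 * d1 + a32 * d2) :
    ∀ N y z : ℕ, y * d2 + z * d3 ≤ N →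
      ∃ k y' z', y' < a22 ∧ z' < a33 ∧ (y' < a12 ∨ z' < a13) ∧
        y * d2 + z * d3 = k * d1 + (y' * d2 + z' * d3) := by
  intro N
  induction N with
  | zero =>
    intro y z h
    have h0 : y * d2 + z * d3 = 0 := Nat.le_zero.mp h
    have hy0 : y = 0 := by
      rcases Nat.mul_eq_zero.mp (Nat.add_eq_zero.mp h0).1 with h' | h'
      · exact h'
      · omega
    have hz0 : z = 0 := by
      rcases Nat.mul_eq_zero.mp (Nat.add_eq_zero.mp h0).2 with h' | h'
      · exact h'
      · omega
    exact ⟨0, 0, 0, ha22, ha33, Or.inl (by omega), by simp [hy0, hz0]⟩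
  | succ N ih =>
    intro y z h
    by_cases hy2 : y < a22
    · by_cases hz3 : z < a33
      · by_cases hcor : y < a12 ∨ z < a13
        · exact ⟨0, y, z, hy2, hz3, hcor, by ring⟩
        · push_neg at hcor
          obtain ⟨hya, hza⟩ := hcor
          obtain ⟨y0, rfl⟩ : ∃ y0, y = y0 + a12 := ⟨y - a12, by omega⟩
          obtain ⟨z0, rfl⟩ : ∃ z0, z = z0 + a13 := ⟨z - a13, by omega⟩
          have key : (y0 + a12) * d2 + (z0 + a13) * d3 = (y0 * d2 + z0 * d3) + a11 * d1 := by
            rw [add_mul, add_mul, hr1]; ring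
          have hpos : 1 ≤ a11 * d1 := by
            have l1 : d2 ≤ a12 * d2 := Nat.le_mul_of_pos_left _ h12
            have : 0 < a11 * d1 := by
              rw [hr1]; omega
            omega
          have hle : y0 * d2 + z0 * d3 ≤ N := by omega
          obtain ⟨k, y', z', p1, p2, p3, pe⟩ := ih y0 z0 hle
          refine ⟨k + a11, y', z', p1, p2, p3, ?_⟩
          rw [key, pe, add_mul]; ring
      · push_neg at hz3
        obtain ⟨z0, rfl⟩ : ∃ z0, z = z0 + a33 := ⟨z - a33, by omega⟩
        have key : y * d2 + (z0 + a33) * d3 = ((y + a32) * d2 + z0 * d3) + a31 * d1 := by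
          rw [add_mul, add_mul, hr3]; ring
        have hpos : 1 ≤ a31 * d1 := Nat.one_le_iff_ne_zero.mpr (by positivity)
        have hle : (y + a32) * d2 + z0 * d3 ≤ N := by omega
        obtain ⟨k, y', z', p1, p2, p3, pe⟩ := ih (y + a32) z0 hle
        refine ⟨k + a31, y', z', p1, p2, p3, ?_⟩
        rw [key, pe, add_mul]; ring
    · push_neg at hy2
      obtain ⟨y0, rfl⟩ : ∃ y0, y = y0 + a22 := ⟨y - a22, by omega⟩
      have key : (y0 + a22) * d2 + z * d3 = (y0 * d2 + (z + a23) * d3) + a21 * d1 := by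
        rw [add_mul, add_mul, hr2]; ring
      have hpos : 1 ≤ a21 * d1 := Nat.one_le_iff_ne_zero.mpr (by positivity)
      have hle : y0 * d2 + (z + a23) * d3 ≤ N := by omega
      obtain ⟨k, y', z', p1, p2, p3, pe⟩ := ih y0 (z + a23) hle
      refine ⟨k + a21, y', z', p1, p2, p3, ?_⟩
      rw [key, pe, add_mul]; ring

/-- Every residue class mod d1 contains a nonnegative combination of d2 and d3. -/
private lemma cover_aux (d1 d2 d3 : ℕ) (hd1 : 0 < d1)
    (hgcd : Nat.gcd d1 (Nat.gcd d2 d3) = 1) (n : ℕ) :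
    ∃ y z : ℕ, (d1 : ℤ) ∣ (n : ℤ) - ((y : ℤ) * d2 + (z : ℤ) * d3) := by
  have b1 := Nat.gcd_eq_gcd_ab d1 (Nat.gcd d2 d3)
  have b2 := Nat.gcd_eq_gcd_ab d2 d3
  rw [hgcd] at b1
  push_cast at b1
  have key : (1 : ℤ) = d1 * (Nat.gcdA d1 (Nat.gcd d2 d3))
      + d2 * (Nat.gcdA d2 d3 * Nat.gcdB d1 (Nat.gcd d2 d3))
      + d3 * (Nat.gcdB d2 d3 * Nat.gcdB d1 (Nat.gcd d2 d3)) := by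
    linear_combination b1 + (Nat.gcdB d1 (Nat.gcd d2 d3)) * b2
  set p : ℤ := Nat.gcdA d2 d3 * Nat.gcdB d1 (Nat.gcd d2 d3) with hp
  set q : ℤ := Nat.gcdB d2 d3 * Nat.gcdB d1 (Nat.gcd d2 d3) with hq
  have hd1z : (d1 : ℤ) ≠ 0 := by positivity
  refine ⟨(((n : ℤ) * p) % d1).toNat, (((n : ℤ) * q) % d1).toNat, ?_⟩
  have e1 : (((((n : ℤ) * p) % d1).toNat : ℤ)) = ((n : ℤ) * p) % d1 :=
    Int.toNat_of_nonneg (Int.emod_nonneg _ hd1z)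
  have e2 : (((((n : ℤ) * q) % d1).toNat : ℤ)) = ((n : ℤ) * q) % d1 :=
    Int.toNat_of_nonneg (Int.emod_nonneg _ hd1z)
  rw [e1, e2]
  have m1 : (d1 : ℤ) ∣ (n : ℤ) * p - ((n : ℤ) * p) % d1 :=
    ⟨((n : ℤ) * p) / d1, by rw [Int.emod_def]; ring⟩
  have m2 : (d1 : ℤ) ∣ (n : ℤ) * q - ((n : ℤ) * q) % d1 :=
    ⟨((n : ℤ) * q) / d1, by rw [Int.emod_def]; ring⟩
  have e : (n : ℤ) - ((((n : ℤ) * p) % d1) * d2 + (((n : ℤ) * q) % d1) * d3)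
      = d1 * ((n : ℤ) * (Nat.gcdA d1 (Nat.gcd d2 d3)))
        + (((n : ℤ) * p - ((n : ℤ) * p) % d1) * d2 + ((n : ℤ) * q - ((n : ℤ) * q) % d1) * d3) := by
    linear_combination (n : ℤ) * key
  rw [e]
  exact dvd_add ⟨_, rfl⟩ (dvd_add (m1.mul_right _) (m2.mul_right _))

/-- Core lattice argument: no integer point (u,v) with u ≤ a22-1, v ≤ a13-1 satisfies
u*d2 + v*d3 = A*d1 with A ≥ 1. -/
private lemma lattice_aux (d1 d2 d3 a12 a13 a21 a22 a23 a31 a32 a33 : ℕ)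
    (hd1 : 0 < d1)
    (h12 : 1 ≤ a12) (h21 : 1 ≤ a21) (h23 : 1 ≤ a23) (h31 : 1 ≤ a31) (h32 : 1 ≤ a32)
    (hgcd : Nat.gcd d1 (Nat.gcd d2 d3) = 1)
    (hr2 : a22 * d2 = a21 * d1 + a23 * d3)
    (hr3 : a33 * d3 = a31 * d1 + a32 * d2)
    (hc2 : a22 = a12 + a32) (hc3 : a33 = a13 + a23)
    (hdet1 : a22 * a33 = d1 + a23 * a32)
    (u v A : ℤ) (hu : u ≤ (a22 : ℤ) - 1) (hv : v ≤ (a13 : ℤ) - 1) (hA : 1 ≤ A)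
    (hval : u * d2 + v * d3 = A * d1) : False := by
  have hd1' : (0 : ℤ) < d1 := by exact_mod_cast hd1
  have hr2' : (a22 : ℤ) * d2 = a21 * d1 + a23 * d3 := by exact_mod_cast hr2
  have hr3' : (a33 : ℤ) * d3 = a31 * d1 + a32 * d2 := by exact_mod_cast hr3
  have hdet1' : (a22 : ℤ) * a33 = d1 + a23 * a32 := by exact_mod_cast hdet1
  have hc2' : (a22 : ℤ) = a12 + a32 := by exact_mod_cast hc2
  have hc3' : (a33 : ℤ) = a13 + a23 := by exact_mod_cast hc3
  have h12' : (1 : ℤ) ≤ a12 := by exact_mod_cast h12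
  have h21' : (1 : ℤ) ≤ a21 := by exact_mod_cast h21
  have h23' : (1 : ℤ) ≤ a23 := by exact_mod_cast h23
  have h31' : (1 : ℤ) ≤ a31 := by exact_mod_cast h31
  have h32' : (1 : ℤ) ≤ a32 := by exact_mod_cast h32
  -- divisibility facts
  have hX2 : (u * a33 + v * a32) * d2 = ((a33 : ℤ) * A - v * a31) * d1 := by
    linear_combination (a33 : ℤ) * hval - v * hr3'
  have hX3 : (u * a33 + v * a32) * d3 = (u * (a31 : ℤ) + a32 * A) * d1 := by
    linear_combination u * hr3' + (a32 : ℤ) * hval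
  have hY2 : (u * a23 + v * a22) * d2 = ((a23 : ℤ) * A + v * a21) * d1 := by
    linear_combination v * hr2' + (a23 : ℤ) * hval
  have hY3 : (u * a23 + v * a22) * d3 = ((a22 : ℤ) * A - u * a21) * d1 := by
    linear_combination (a22 : ℤ) * hval - u * hr2'
  have hcop : IsCoprime (d1 : ℤ) ((Nat.gcd d2 d3 : ℕ) : ℤ) :=
    Nat.isCoprime_iff_coprime.mpr hgcd
  have hbez : ((Nat.gcd d2 d3 : ℕ) : ℤ) = d2 * Nat.gcdA d2 d3 + d3 * Nat.gcdB d2 d3 :=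
    Nat.gcd_eq_gcd_ab d2 d3
  have dvd_of : ∀ X : ℤ, (d1 : ℤ) ∣ X * d2 → (d1 : ℤ) ∣ X * d3 → (d1 : ℤ) ∣ X := by
    intro X h2 h3
    apply hcop.dvd_of_dvd_mul_right
    have e : X * ((Nat.gcd d2 d3 : ℕ) : ℤ)
        = (X * d2) * Nat.gcdA d2 d3 + (X * d3) * Nat.gcdB d2 d3 := by
      rw [hbez]; ring
    rw [e]
    exact dvd_add (h2.mul_right _) (h3.mul_right _)
  obtain ⟨s, hs⟩ := dvd_of _ ⟨_, hX2.trans (mul_comm _ _)⟩ ⟨_, hX3.trans (mul_comm _ _)⟩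
  obtain ⟨t, ht⟩ := dvd_of _ ⟨_, hY2.trans (mul_comm _ _)⟩ ⟨_, hY3.trans (mul_comm _ _)⟩
  have hd1ne : (d1 : ℤ) ≠ 0 := ne_of_gt hd1'
  have hu' : u = s * a22 - t * a32 := by
    apply mul_left_cancel₀ hd1ne
    linear_combination (a22 : ℤ) * hs - (a32 : ℤ) * ht - u * hdet1'
  have hv' : v = t * a33 - s * a23 := by
    apply mul_left_cancel₀ hd1ne
    linear_combination (a33 : ℤ) * ht - (a23 : ℤ) * hs - v * hdet1'
  have hA' : A = s * a21 + t * a31 := by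
    apply mul_left_cancel₀ hd1ne
    linear_combination (d2 : ℤ) * hu' + (d3 : ℤ) * hv' - hval + s * hr2' + t * hr3'
  rcases le_or_gt s 0 with hs0 | hs0
  · have ht0 : t ≤ 0 := by
      by_contra h'
      push_neg at h'
      have ht1 : (1 : ℤ) ≤ t := h'
      have e1 : (a33 : ℤ) ≤ t * a33 := le_mul_of_one_le_left (by positivity) ht1
      have e2 : s * (a23 : ℤ) ≤ 0 := mul_nonpos_of_nonpos_of_nonneg hs0 (by positivity)
      linarith
    have e1 : s * (a21 : ℤ) ≤ 0 := mul_nonpos_of_nonpos_of_nonneg hs0 (by positivity)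
    have e2 : t * (a31 : ℤ) ≤ 0 := mul_nonpos_of_nonpos_of_nonneg ht0 (by positivity)
    linarith
  · have hs1 : (1 : ℤ) ≤ s := hs0
    rcases le_or_gt t 0 with ht0 | ht0
    · have e1 : (a22 : ℤ) ≤ s * a22 := le_mul_of_one_le_left (by positivity) hs1
      have e2 : t * (a32 : ℤ) ≤ 0 := mul_nonpos_of_nonpos_of_nonneg ht0 (by positivity)
      linarith
    · have ht1 : (1 : ℤ) ≤ t := ht0
      have hts : t ≤ s - 1 := by
        by_contra h'
        push_neg at h'
        have hst : s ≤ t := by omega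
        have e1 : s * (a33 : ℤ) ≤ t * a33 := mul_le_mul_of_nonneg_right hst (by positivity)
        have e2 : s * (a33 : ℤ) = s * a13 + s * a23 := by linear_combination s * hc3'
        have e3 : (a13 : ℤ) ≤ s * a13 := le_mul_of_one_le_left (by positivity) hs1
        linarith
      have e1 : (t + 1) * (a32 : ℤ) ≤ s * a32 :=
        mul_le_mul_of_nonneg_right (by omega) (by positivity)
      have e2 : s * (a22 : ℤ) = s * a12 + s * a32 := by linear_combination s * hc2'
      have e3 : (a12 : ℤ) ≤ s * a12 := le_mul_of_one_le_left (by positivity) hs1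
      linarith

/-- Non-representability of the corner element minus (d1+d2+d3). -/
private lemma corner_nonrep (d1 d2 d3 a12 a13 a21 a22 a23 a31 a32 a33 : ℕ)
    (hd1 : 0 < d1)
    (h12 : 1 ≤ a12) (h21 : 1 ≤ a21) (h23 : 1 ≤ a23) (h31 : 1 ≤ a31) (h32 : 1 ≤ a32)
    (hgcd : Nat.gcd d1 (Nat.gcd d2 d3) = 1)
    (hr2 : a22 * d2 = a21 * d1 + a23 * d3)
    (hr3 : a33 * d3 = a31 * d1 + a32 * d2)
    (hc2 : a22 = a12 + a32) (hc3 : a33 = a13 + a23)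
    (hdet1 : a22 * a33 = d1 + a23 * a32)
    (a b c : ℕ)
    (h : a22 * d2 + a13 * d3 = (a + 1) * d1 + ((b + 1) * d2 + (c + 1) * d3)) : False := by
  have h' : ((a22 : ℤ) - (b + 1)) * d2 + ((a13 : ℤ) - (c + 1)) * d3 = ((a : ℤ) + 1) * d1 := by
    have hz : (a22 : ℤ) * d2 + a13 * d3 = ((a : ℤ) + 1) * d1 + (((b : ℤ) + 1) * d2 + ((c : ℤ) + 1) * d3) := by
      exact_mod_cast h
    linear_combination hz
  exact lattice_aux d1 d2 d3 a12 a13 a21 a22 a23 a31 a32 a33 hd1 h12 h21 h23 h31 h32 hgcd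
    hr2 hr3 hc2 hc3 hdet1 ((a22 : ℤ) - (b + 1)) ((a13 : ℤ) - (c + 1)) ((a : ℤ) + 1)
    (by omega) (by omega) (by omega) h'

theorem stmt12 (d1 d2 d3 : ℕ)
    (a11 a12 a13 a21 a22 a23 a31 a32 a33 : ℕ)
    (hd1 : 1 < d1) (h12 : d1 < d2) (h23 : d2 < d3)
    (hgcd : Nat.gcd d1 (Nat.gcd d2 d3) = 1)
    (hmin1 : ¬ ∃ b c : ℕ, d1 = b * d2 + c * d3)
    (hmin2 : ¬ ∃ a c : ℕ, d2 = a * d1 + c * d3)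
    (hmin3 : ¬ ∃ a b : ℕ, d3 = a * d1 + b * d2)
    (hoff : 1 ≤ a12 ∧ 1 ≤ a13 ∧ 1 ≤ a21 ∧ 1 ≤ a23 ∧ 1 ≤ a31 ∧ 1 ≤ a32)
    (hdiag : 2 ≤ a11 ∧ 2 ≤ a22 ∧ 2 ≤ a33)
    (hr1 : a11 * d1 = a12 * d2 + a13 * d3)
    (hr2 : a22 * d2 = a21 * d1 + a23 * d3)
    (hr3 : a33 * d3 = a31 * d1 + a32 * d2)
    (hc1 : a11 = a21 + a31) (hc2 : a22 = a12 + a32) (hc3 : a33 = a13 + a23)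
    (hdet1 : a22 * a33 = d1 + a23 * a32)
    (hdet2 : a11 * a33 = d2 + a13 * a31)
    (hdet3 : a11 * a22 = d3 + a12 * a21)
    (F : ℕ)
    (hF : IsGreatest {n : ℕ | ¬ ∃ a b c : ℕ, n = a * d1 + b * d2 + c * d3} F) :
    F + (d1 + d2 + d3) = a11 * a22 * a33 + max (a12 * a23 * a31) (a13 * a32 * a21) := by
  obtain ⟨ho12, ho13, ho21, ho23, ho31, ho32⟩ := hoff
  obtain ⟨hD11, hD22, hD33⟩ := hdiag
  have hd1p : 0 < d1 := by omega
  have hd2p : 0 < d2 := by omega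
  have hd3p : 0 < d3 := by omega
  -- the two identities
  have idP : a22 * d2 + a13 * d3 = a11 * a22 * a33 + a13 * a32 * a21 := by
    have hdet2' : (a11 : ℤ) * a33 = d2 + a13 * a31 := by exact_mod_cast hdet2
    have hdet3' : (a11 : ℤ) * a22 = d3 + a12 * a21 := by exact_mod_cast hdet3
    have hc1' : (a11 : ℤ) = a21 + a31 := by exact_mod_cast hc1
    have hc2' : (a22 : ℤ) = a12 + a32 := by exact_mod_cast hc2
    have hz : (a22 : ℤ) * d2 + a13 * d3 = a11 * a22 * a33 + a13 * a32 * a21 := by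
      linear_combination (-(a22 : ℤ)) * hdet2' - (a13 : ℤ) * hdet3' + (a13 : ℤ) * a22 * hc1'
        + (a13 : ℤ) * a21 * hc2'
    exact_mod_cast hz
  have idQ : a12 * d2 + a33 * d3 = a11 * a22 * a33 + a12 * a23 * a31 := by
    have hdet2' : (a11 : ℤ) * a33 = d2 + a13 * a31 := by exact_mod_cast hdet2
    have hdet3' : (a11 : ℤ) * a22 = d3 + a12 * a21 := by exact_mod_cast hdet3
    have hc1' : (a11 : ℤ) = a21 + a31 := by exact_mod_cast hc1
    have hc3' : (a33 : ℤ) = a13 + a23 := by exact_mod_cast hc3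
    have hz : (a12 : ℤ) * d2 + a33 * d3 = a11 * a22 * a33 + a12 * a23 * a31 := by
      linear_combination (-(a12 : ℤ)) * hdet2' - (a33 : ℤ) * hdet3' + (a12 : ℤ) * a33 * hc1'
        + (a12 : ℤ) * a31 * hc3'
    exact_mod_cast hz
  -- every n beyond the bound is representable
  have hrep : ∀ n : ℕ, max (a12 * d2 + a33 * d3) (a22 * d2 + a13 * d3) < n + (d1 + d2 + d3) →
      ∃ x y z : ℕ, n = x * d1 + y * d2 + z * d3 := by
    intro n hn
    obtain ⟨y0, z0, hdvd⟩ := cover_aux d1 d2 d3 hd1p hgcd n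
    obtain ⟨k, y, z, hy, hz, hyz, heq⟩ := red_aux d1 d2 d3 a11 a12 a13 a21 a22 a23 a31 a32 a33
      hd1p hd2p hd3p ho12 ho21 ho31 (by omega) (by omega) hr1 hr2 hr3
      (y0 * d2 + z0 * d3) y0 z0 le_rfl
    have heq' : ((y0 : ℤ) * d2 + (z0 : ℤ) * d3) = (k : ℤ) * d1 + ((y : ℤ) * d2 + (z : ℤ) * d3) := by
      exact_mod_cast heq
    have hdvd2 : (d1 : ℤ) ∣ (n : ℤ) - ((y : ℤ) * d2 + (z : ℤ) * d3) := by
      have e : (n : ℤ) - ((y : ℤ) * d2 + (z : ℤ) * d3)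
          = ((n : ℤ) - ((y0 : ℤ) * d2 + (z0 : ℤ) * d3)) + d1 * k := by
        linear_combination heq'
      rw [e]
      exact dvd_add hdvd ⟨k, rfl⟩
    have hw : y * d2 + z * d3 + (d2 + d3) ≤ max (a12 * d2 + a33 * d3) (a22 * d2 + a13 * d3) := by
      rcases hyz with h' | h'
      · refine le_trans ?_ (le_max_left _ _)
        have e1 : (y + 1) * d2 ≤ a12 * d2 := Nat.mul_le_mul_right _ (by omega)
        have e2 : (z + 1) * d3 ≤ a33 * d3 := Nat.mul_le_mul_right _ (by omega)
        have e1' : y * d2 + d2 ≤ a12 * d2 := by rw [add_mul, one_mul] at e1; exact e1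
        have e2' : z * d3 + d3 ≤ a33 * d3 := by rw [add_mul, one_mul] at e2; exact e2
        omega
      · refine le_trans ?_ (le_max_right _ _)
        have e1 : (y + 1) * d2 ≤ a22 * d2 := Nat.mul_le_mul_right _ (by omega)
        have e2 : (z + 1) * d3 ≤ a13 * d3 := Nat.mul_le_mul_right _ (by omega)
        have e1' : y * d2 + d2 ≤ a22 * d2 := by rw [add_mul, one_mul] at e1; exact e1
        have e2' : z * d3 + d3 ≤ a13 * d3 := by rw [add_mul, one_mul] at e2; exact e2
        omega
    have hwn : y * d2 + z * d3 < n + d1 := by omega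
    obtain ⟨m, hm⟩ := hdvd2
    have hm0 : 0 ≤ m := by
      by_contra hneg
      push_neg at hneg
      have hm1 : m ≤ -1 := by omega
      have hd1' : (0 : ℤ) < d1 := by exact_mod_cast hd1p
      have e1 : (d1 : ℤ) * m ≤ (d1 : ℤ) * (-1) := by
        exact mul_le_mul_of_nonneg_left hm1 (le_of_lt hd1')
      have e2 : (n : ℤ) + d1 ≤ (y : ℤ) * d2 + (z : ℤ) * d3 := by linarith
      have e3 : n + d1 ≤ y * d2 + z * d3 := by exact_mod_cast e2
      omega
    refine ⟨m.toNat, y, z, ?_⟩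
    have e : (n : ℤ) = ((m.toNat : ℤ)) * d1 + ((y : ℤ) * d2 + (z : ℤ) * d3) := by
      rw [Int.toNat_of_nonneg hm0]; linarith
    have e' : (n : ℤ) = ((m.toNat : ℤ)) * d1 + (y : ℤ) * d2 + (z : ℤ) * d3 := by linarith
    exact_mod_cast e'
  -- F + (d1+d2+d3) ≤ max Q P
  have hle : F + (d1 + d2 + d3) ≤ max (a12 * d2 + a33 * d3) (a22 * d2 + a13 * d3) := by
    by_contra h'
    push_neg at h'
    exact hF.1 (hrep F h')
  -- lower bound: the gap
  have hP3 : d1 + d2 + d3 ≤ a22 * d2 + a13 * d3 := by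
    have e1 : 2 * d2 ≤ a22 * d2 := Nat.mul_le_mul_right _ hD22
    have e2 : 1 * d3 ≤ a13 * d3 := Nat.mul_le_mul_right _ ho13
    omega
  have hmax3 : d1 + d2 + d3 ≤ max (a12 * d2 + a33 * d3) (a22 * d2 + a13 * d3) :=
    le_trans hP3 (le_max_right _ _)
  obtain ⟨G, hG⟩ : ∃ G, max (a12 * d2 + a33 * d3) (a22 * d2 + a13 * d3) = G + (d1 + d2 + d3) :=
    ⟨_, (Nat.sub_add_cancel hmax3).symm⟩
  have hGmem : G ∈ {n : ℕ | ¬ ∃ a b c : ℕ, n = a * d1 + b * d2 + c * d3} := by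
    rintro ⟨x, y, z, hxyz⟩
    rcases le_total (a12 * d2 + a33 * d3) (a22 * d2 + a13 * d3) with hmx | hmx
    · rw [max_eq_right hmx] at hG
      have h : a22 * d2 + a13 * d3 = (x + 1) * d1 + ((y + 1) * d2 + (z + 1) * d3) := by
        rw [hG, hxyz]; ring
      exact corner_nonrep d1 d2 d3 a12 a13 a21 a22 a23 a31 a32 a33 hd1p
        ho12 ho21 ho23 ho31 ho32 hgcd hr2 hr3 hc2 hc3 hdet1 x y z h
    · rw [max_eq_left hmx] at hG
      have h : a33 * d3 + a12 * d2 = (x + 1) * d1 + ((z + 1) * d3 + (y + 1) * d2) := by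
        rw [show a33 * d3 + a12 * d2 = a12 * d2 + a33 * d3 from by ring, hG, hxyz]; ring
      exact corner_nonrep d1 d3 d2 a13 a12 a31 a33 a32 a21 a23 a22 hd1p
        ho13 ho31 ho32 ho21 ho23 (by rw [Nat.gcd_comm d3 d2]; exact hgcd)
        hr3 hr2 hc3 hc2 (by rw [mul_comm a33 a22, mul_comm a32 a23]; exact hdet1)
        x z y h
  have hGF : G ≤ F := hF.2 hGmem
  have hfinal : F + (d1 + d2 + d3) = max (a12 * d2 + a33 * d3) (a22 * d2 + a13 * d3) := by
    have : max (a12 * d2 + a33 * d3) (a22 * d2 + a13 * d3) ≤ F + (d1 + d2 + d3) := by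
      rw [hG]; exact Nat.add_le_add_right hGF _
    omega
  rw [hfinal]
  rcases le_total (a12 * a23 * a31) (a13 * a32 * a21) with h | h
  · have hQP : a12 * d2 + a33 * d3 ≤ a22 * d2 + a13 * d3 := by
      rw [idP, idQ]; exact Nat.add_le_add_left h _
    rw [max_eq_right hQP, max_eq_right h, idP]
  · have hPQ : a22 * d2 + a13 * d3 ≤ a12 * d2 + a33 * d3 := by
      rw [idP, idQ]; exact Nat.add_le_add_left h _
    rw [max_eq_left hPQ, max_eq_left h, idQ]
end

section
/- For a non-symmetric numerical semigroup S(d1,d2,d3) with standard-form first minimal relation matrix, the genus (number of gaps) satisfies 2*G(d1,d2,d3) + d1 + d2 + d3 = 1 + a11*a22*a33 + a13*a32*a21 + a12*a23*a31. -/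
/-!
The numbers `y * d2 + z * d3` with `(y, z)` in the L-shaped region `[0, a22) × [0, a33)` minus
the corner `[a12, a22) × [a13, a33)` form the Apéry set of `S` with respect to `d1`: the three
relations rewrite any `b * d2 + c * d3` into this region while splitting off a positive multiple
of `d1`, and the region has `a22 * a33 - a32 * a23 = d1` points, so it meets every residue class
mod `d1` exactly once. Selmer's formula `d1 * G + d1 * (d1 - 1) / 2 = ∑ w` then expresses the
genus through a lattice-point sum over the region, which is a polynomial in the `a_ij`.
-/

open Finset

section Selmer

variable {ι : Type*} {m : ℕ} {L : Finset ι} {w : ι → ℕ}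

theorem image_mod_eq_range (hm : 0 < m) (hcover : ∀ n, ∃ p ∈ L, n ≡ w p [MOD m]) :
    L.image (fun p => w p % m) = range m := by
  ext r
  simp only [mem_image, mem_range]
  refine ⟨fun ⟨p, _, hp⟩ => hp ▸ Nat.mod_lt _ hm, fun hr => ?_⟩
  obtain ⟨p, hp, hpr⟩ := hcover r
  exact ⟨p, hp, Eq.trans hpr.symm (Nat.mod_eq_of_lt hr)⟩

theorem injOn_mod_of_card_eq (hm : 0 < m) (hcard : #L = m)
    (hcover : ∀ n, ∃ p ∈ L, n ≡ w p [MOD m]) : Set.InjOn (fun p => w p % m) L := by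
  classical
  rw [← card_image_iff, image_mod_eq_range hm hcover, card_range, hcard]

theorem setOf_not_eq_biUnion (hm : 0 < m) (hcard : #L = m)
    (hcover : ∀ n, ∃ p ∈ L, n ≡ w p [MOD m]) {P : ℕ → Prop}
    (hP : ∀ n, P n ↔ ∃ p ∈ L, w p ≤ n ∧ n ≡ w p [MOD m]) :
    {n | ¬ P n} = ↑(L.biUnion fun p => {n ∈ range (w p) | n ≡ w p [MOD m]}) := by
  ext n
  simp only [Set.mem_ofPred_eq, hP, coe_biUnion, coe_filter, mem_range, Set.mem_iUnion,
    exists_prop, not_exists, not_and]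
  constructor
  · intro hn
    obtain ⟨p, hp, hnp⟩ := hcover n
    exact ⟨p, hp, lt_of_not_ge fun h => hn p hp h hnp, hnp⟩
  · rintro ⟨p, hp, hlt, hnp⟩ q hq hle hnq
    obtain rfl : q = p := injOn_mod_of_card_eq hm hcard hcover hq hp (hnq.symm.trans hnp)
    exact absurd hle (not_le.mpr hlt)

theorem mul_card_gaps_add_sum_range_eq_sum (hm : 0 < m) (hcard : #L = m)
    (hcover : ∀ n, ∃ p ∈ L, n ≡ w p [MOD m]) {P : ℕ → Prop}
    (hP : ∀ n, P n ↔ ∃ p ∈ L, w p ≤ n ∧ n ≡ w p [MOD m]) :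
    m * Nat.card {n | ¬ P n} + ∑ r ∈ range m, r = ∑ p ∈ L, w p := by
  have hinj := injOn_mod_of_card_eq hm hcard hcover
  have hgaps : Nat.card {n | ¬ P n} = ∑ p ∈ L, w p / m := by
    rw [setOf_not_eq_biUnion hm hcard hcover hP, Nat.card_coe_set_eq, Set.ncard_coe_finset,
      card_biUnion]
    · refine sum_congr rfl fun p _ => ?_
      rw [← Nat.count_eq_card_filter_range, Nat.count_modEq_card _ hm, if_neg (lt_irrefl _),
        add_zero]
    · intro p hp q hq hpq
      refine disjoint_left.mpr fun n hnp hnq => hpq (hinj hp hq ?_)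
      exact (mem_filter.mp hnp).2.symm.trans (mem_filter.mp hnq).2
  have hres : ∑ p ∈ L, w p % m = ∑ r ∈ range m, r := by
    rw [← image_mod_eq_range hm hcover, sum_image hinj]
  rw [hgaps, ← hres, mul_sum, ← sum_add_distrib]
  exact sum_congr rfl fun p _ => Nat.div_add_mod _ _

end Selmer

def lShape (A B a b : ℕ) : Finset (ℕ × ℕ) := {p ∈ range A ×ˢ range B | p.1 < a ∨ p.2 < b}

theorem sum_Ico_id_mul_two_add (a n : ℕ) :
    (∑ i ∈ Ico a (a + n), i) * 2 + n = n * (2 * a + n) := by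
  induction n with
  | zero => simp
  | succ n ih =>
    rw [← Nat.add_assoc a n 1, sum_Ico_succ_top (Nat.le_add_right a n)]
    nlinarith

theorem two_mul_sum_Ico_prod_Ico (a b A B u v : ℕ) :
    2 * ∑ p ∈ Ico a (a + A) ×ˢ Ico b (b + B), (p.1 * u + p.2 * v) + A * B * (u + v)
      = A * B * ((2 * a + A) * u + (2 * b + B) * v) := by
  have hA := sum_Ico_id_mul_two_add a A
  have hB := sum_Ico_id_mul_two_add b B
  rw [sum_product]
  simp only [sum_add_distrib, sum_const, Nat.card_Ico, Nat.add_sub_cancel_left, smul_eq_mul]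
  rw [← sum_mul, ← mul_sum, ← sum_mul]
  zify at hA hB ⊢
  linear_combination ((B : ℤ) * u) * hA + ((A : ℤ) * v) * hB

theorem filter_not_lShape (a b c d : ℕ) :
    {p ∈ range (a + c) ×ˢ range (b + d) | ¬(p.1 < a ∨ p.2 < b)}
      = Ico a (a + c) ×ˢ Ico b (b + d) := by
  ext ⟨y, z⟩
  simp only [mem_filter, mem_product, mem_range, mem_Ico]
  omega

theorem card_lShape (a b c d : ℕ) :
    #(lShape (a + c) (b + d) a b) + c * d = (a + c) * (b + d) := by
  have hsplit := card_filter_add_card_filter_not (s := range (a + c) ×ˢ range (b + d))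
    (fun p => p.1 < a ∨ p.2 < b)
  rw [filter_not_lShape] at hsplit
  simpa [lShape] using hsplit

theorem two_mul_sum_lShape (a b c d u v : ℕ) :
    2 * ∑ p ∈ lShape (a + c) (b + d) a b, (p.1 * u + p.2 * v)
        + c * d * ((2 * a + c) * u + (2 * b + d) * v) + (a + c) * (b + d) * (u + v)
      = (a + c) * (b + d) * ((a + c) * u + (b + d) * v) + c * d * (u + v) := by
  have hsplit := sum_filter_add_sum_filter_not (range (a + c) ×ˢ range (b + d))
    (fun p => p.1 < a ∨ p.2 < b) (fun p => p.1 * u + p.2 * v)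
  rw [filter_not_lShape] at hsplit
  have hbig := two_mul_sum_Ico_prod_Ico 0 0 (a + c) (b + d) u v
  have hcorner := two_mul_sum_Ico_prod_Ico a b c d u v
  simp only [zero_add, ← range_eq_Ico, mul_zero] at hbig
  rw [lShape]
  linarith

theorem exists_modEq_add_mul {m d2 d3 : ℕ} [NeZero m] (h : Nat.Coprime m (Nat.gcd d2 d3))
    (t : ℕ) :
    ∃ b c : ℕ, b * d2 + c * d3 ≡ t [MOD m] := by
  set g := Nat.gcd d2 d3
  set u := ZMod.unitOfCoprime g h.symm
  have hu : (u : ZMod m) = g := ZMod.coe_unitOfCoprime g h.symm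
  have hbez : ((g : ℤ) : ZMod m) = ((d2 * Nat.gcdA d2 d3 + d3 * Nat.gcdB d2 d3 : ℤ) : ZMod m) := by
    rw [← Nat.gcd_eq_gcd_ab]
  refine ⟨(t * ↑u⁻¹ * (Nat.gcdA d2 d3 : ZMod m)).val,
    (t * ↑u⁻¹ * (Nat.gcdB d2 d3 : ZMod m)).val, ?_⟩
  rw [← ZMod.natCast_eq_natCast_iff]
  push_cast at hbez ⊢
  simp only [ZMod.natCast_zmod_val]
  calc _ = t * ↑u⁻¹ * (d2 * Nat.gcdA d2 d3 + d3 * Nat.gcdB d2 d3 : ZMod m) := by ring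
    _ = t := by rw [← hbez, ← hu, mul_assoc, Units.inv_mul, mul_one]

theorem exists_eq_mul_add_mem_lShape {d1 d2 d3 a11 a12 a13 a21 a22 a23 a31 a32 a33 : ℕ}
    (hd1 : 0 < d1) (h11 : 0 < a11) (h21 : 0 < a21) (h31 : 0 < a31)
    (hr1 : a11 * d1 = a12 * d2 + a13 * d3) (hr2 : a22 * d2 = a21 * d1 + a23 * d3)
    (hr3 : a33 * d3 = a31 * d1 + a32 * d2) (b c : ℕ) :
    ∃ x, ∃ p ∈ lShape a22 a33 a12 a13, b * d2 + c * d3 = x * d1 + (p.1 * d2 + p.2 * d3) := by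
  induction hn : b * d2 + c * d3 using Nat.strong_induction_on generalizing b c with
  | _ n ih =>
  have step : ∀ k b' c', 0 < k → b * d2 + c * d3 = k * d1 + (b' * d2 + c' * d3) →
      ∃ x, ∃ p ∈ lShape a22 a33 a12 a13, n = x * d1 + (p.1 * d2 + p.2 * d3) := by
    intro k b' c' hk h
    obtain ⟨x, p, hp, hx⟩ := ih _ (by rw [← hn, h]; nlinarith) b' c' rfl
    exact ⟨x + k, p, hp, by rw [← hn, h, hx]; ring⟩
  by_cases h3 : a33 ≤ c
  · obtain ⟨c, rfl⟩ := Nat.exists_eq_add_of_le h3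
    exact step a31 (b + a32) c h31 (by rw [add_mul, hr3]; ring)
  by_cases h1 : a12 ≤ b ∧ a13 ≤ c
  · obtain ⟨b, rfl⟩ := Nat.exists_eq_add_of_le h1.1
    obtain ⟨c, rfl⟩ := Nat.exists_eq_add_of_le h1.2
    exact step a11 b c h11 (by rw [hr1]; ring)
  by_cases h2 : a22 ≤ b
  · obtain ⟨b, rfl⟩ := Nat.exists_eq_add_of_le h2
    exact step a21 b (c + a23) h21 (by rw [add_mul, hr2]; ring)
  refine ⟨0, (b, c), ?_, by rw [← hn]; ring⟩
  simp only [lShape, mem_filter, mem_product, mem_range]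
  omega

theorem exists_mem_modEq_of_reduce {d1 d2 d3 : ℕ} [NeZero d1] {L : Finset (ℕ × ℕ)}
    (hgcd : Nat.Coprime d1 (Nat.gcd d2 d3))
    (hred : ∀ b c, ∃ x, ∃ p ∈ L, b * d2 + c * d3 = x * d1 + (p.1 * d2 + p.2 * d3)) (n : ℕ) :
    ∃ p ∈ L, n ≡ p.1 * d2 + p.2 * d3 [MOD d1] := by
  obtain ⟨b, c, hbc⟩ := exists_modEq_add_mul hgcd n
  obtain ⟨x, p, hp, hx⟩ := hred b c
  refine ⟨p, hp, hbc.symm.trans ?_⟩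
  rw [hx]
  exact Nat.mul_add_mod_self_right _ _ _

theorem exists_mul_add_iff_of_reduce {d1 d2 d3 : ℕ} {L : Finset (ℕ × ℕ)}
    (hred : ∀ b c, ∃ x, ∃ p ∈ L, b * d2 + c * d3 = x * d1 + (p.1 * d2 + p.2 * d3)) (n : ℕ) :
    (∃ a b c, n = a * d1 + b * d2 + c * d3) ↔
      ∃ p ∈ L, p.1 * d2 + p.2 * d3 ≤ n ∧ n ≡ p.1 * d2 + p.2 * d3 [MOD d1] := by
  constructor
  · rintro ⟨a, b, c, rfl⟩
    obtain ⟨x, p, hp, hx⟩ := hred b c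
    refine ⟨p, hp, ?_⟩
    rw [add_assoc, hx, ← add_assoc, ← add_mul]
    exact ⟨Nat.le_add_left _ _, Nat.mul_add_mod_self_right _ _ _⟩
  · rintro ⟨p, hp, hle, hmod⟩
    obtain ⟨k, hk⟩ := (Nat.modEq_iff_dvd' hle).mp hmod.symm
    exact ⟨k, p.1, p.2, by rw [add_assoc, mul_comm, ← hk, Nat.sub_add_cancel hle]⟩

theorem stmt13_general (d1 d2 d3 : ℕ)
    (a11 a12 a13 a21 a22 a23 a31 a32 a33 : ℕ)
    (hd1 : 1 < d1)
    (hgcd : Nat.gcd d1 (Nat.gcd d2 d3) = 1)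
    (hoff : 1 ≤ a12 ∧ 1 ≤ a13 ∧ 1 ≤ a21 ∧ 1 ≤ a23 ∧ 1 ≤ a31 ∧ 1 ≤ a32)
    (hr1 : a11 * d1 = a12 * d2 + a13 * d3)
    (hr2 : a22 * d2 = a21 * d1 + a23 * d3)
    (hr3 : a33 * d3 = a31 * d1 + a32 * d2)
    (hc1 : a11 = a21 + a31) (hc2 : a22 = a12 + a32) (hc3 : a33 = a13 + a23)
    (hdet1 : a22 * a33 = d1 + a23 * a32)
    (hdet2 : a11 * a33 = d2 + a13 * a31)
    (hdet3 : a11 * a22 = d3 + a12 * a21) :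
    2 * Nat.card {n : ℕ | ¬ ∃ a b c : ℕ, n = a * d1 + b * d2 + c * d3} + (d1 + d2 + d3)
      = 1 + a11 * a22 * a33 + a13 * a32 * a21 + a12 * a23 * a31 := by
  obtain ⟨-, -, h21, -, h31, -⟩ := hoff
  subst hc1 hc2 hc3
  have hd : 0 < d1 := by omega
  have : NeZero d1 := ⟨hd.ne'⟩
  have hred := exists_eq_mul_add_mem_lShape hd (by omega) h21 h31 hr1 hr2 hr3
  have hcard : #(lShape (a12 + a32) (a13 + a23) a12 a13) = d1 := by
    linarith [card_lShape a12 a13 a32 a23]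
  have hgaps := mul_card_gaps_add_sum_range_eq_sum hd hcard
    (exists_mem_modEq_of_reduce (Nat.coprime_iff_gcd_eq_one.mpr hgcd) hred)
    (exists_mul_add_iff_of_reduce hred)
  have hsum := two_mul_sum_lShape a12 a13 a32 a23 d2 d3
  have hgauss := sum_range_id_mul_two d1
  apply Nat.eq_of_mul_eq_mul_left hd
  obtain rfl : d1 = a12 * a13 + a12 * a23 + a32 * a13 := by linarith
  obtain rfl : d2 = a21 * a13 + a21 * a23 + a31 * a23 := by linarith
  obtain rfl : d3 = a21 * a32 + a31 * a12 + a31 * a32 := by linarith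
  zify [hd] at hgaps hsum hgauss ⊢
  linear_combination 2 * hgaps - hgauss + hsum

theorem stmt13 (d1 d2 d3 : ℕ)
    (a11 a12 a13 a21 a22 a23 a31 a32 a33 : ℕ)
    (hd1 : 1 < d1) (h12 : d1 < d2) (h23 : d2 < d3)
    (hgcd : Nat.gcd d1 (Nat.gcd d2 d3) = 1)
    (hmin1 : ¬ ∃ b c : ℕ, d1 = b * d2 + c * d3)
    (hmin2 : ¬ ∃ a c : ℕ, d2 = a * d1 + c * d3)
    (hmin3 : ¬ ∃ a b : ℕ, d3 = a * d1 + b * d2)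
    (hoff : 1 ≤ a12 ∧ 1 ≤ a13 ∧ 1 ≤ a21 ∧ 1 ≤ a23 ∧ 1 ≤ a31 ∧ 1 ≤ a32)
    (hdiag : 2 ≤ a11 ∧ 2 ≤ a22 ∧ 2 ≤ a33)
    (hr1 : a11 * d1 = a12 * d2 + a13 * d3)
    (hr2 : a22 * d2 = a21 * d1 + a23 * d3)
    (hr3 : a33 * d3 = a31 * d1 + a32 * d2)
    (hc1 : a11 = a21 + a31) (hc2 : a22 = a12 + a32) (hc3 : a33 = a13 + a23)
    (hdet1 : a22 * a33 = d1 + a23 * a32)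
    (hdet2 : a11 * a33 = d2 + a13 * a31)
    (hdet3 : a11 * a22 = d3 + a12 * a21) :
    2 * Nat.card {n : ℕ | ¬ ∃ a b c : ℕ, n = a * d1 + b * d2 + c * d3} + (d1 + d2 + d3)
      = 1 + a11 * a22 * a33 + a13 * a32 * a21 + a12 * a23 * a31 :=
  stmt13_general d1 d2 d3 a11 a12 a13 a21 a22 a23 a31 a32 a33 hd1 hgcd hoff hr1 hr2 hr3 hc1 hc2 hc3
    hdet1 hdet2 hdet3
end

section
/- If d1, d2, d3 are pairwise relatively prime integers greater than 1 that form a minimal generating set, then the numerical semigroup S(d1,d2,d3) is not symmetric. -/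
namespace Stmt15

def SP (a b c : ℕ) (n : ℤ) : Prop := ∃ x y z : ℕ, n = x * a + y * b + z * c

variable {a b c : ℕ}

lemma SP_nonneg {n : ℤ} (h : SP a b c n) : 0 ≤ n := by
  obtain ⟨x, y, z, rfl⟩ := h; positivity

lemma SP_add {m n : ℤ} (hm : SP a b c m) (hn : SP a b c n) : SP a b c (m + n) := by
  obtain ⟨x, y, z, rfl⟩ := hm; obtain ⟨x', y', z', rfl⟩ := hn
  exact ⟨x + x', y + y', z + z', by push_cast; ring⟩

lemma SP_bc (x y : ℕ) : SP a b c ((x : ℤ) * b + y * c) := ⟨0, x, y, by push_cast; ring⟩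

lemma SP_a : SP a b c (a : ℤ) := ⟨1, 0, 0, by push_cast; ring⟩

lemma SP_nat_mul_a (k : ℕ) {n : ℤ} (h : SP a b c n) : SP a b c (n + k * a) := by
  obtain ⟨x, y, z, rfl⟩ := h
  exact ⟨x + k, y, z, by push_cast; ring⟩

lemma L_desc (ha : 0 < a) : ∀ m : ℕ, ∀ w : ℤ, w.toNat ≤ m → SP a b c w →
    ∃ v : ℤ, (SP a b c v ∧ ¬ SP a b c (v - a)) ∧ (a : ℤ) ∣ w - v ∧ v ≤ w := by
  intro m
  induction m with
  | zero =>
    intro w hw hS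
    have h0 : 0 ≤ w := SP_nonneg hS
    refine ⟨w, ⟨hS, fun hcon => ?_⟩, ⟨0, by ring⟩, le_refl _⟩
    have := SP_nonneg hcon
    omega
  | succ m ih =>
    intro w hw hS
    by_cases hS' : SP a b c (w - a)
    · have h0 : 0 ≤ w - (a:ℤ) := SP_nonneg hS'
      obtain ⟨v, hv1, ⟨k, hk⟩, hv3⟩ := ih (w - a) (by omega) hS'
      exact ⟨v, hv1, ⟨k + 1, by linarith⟩, by omega⟩
    · exact ⟨w, ⟨hS, hS'⟩, ⟨0, by ring⟩, le_refl _⟩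

lemma AP_min (ha : 0 < a) {w n : ℤ} (hw : SP a b c w ∧ ¬ SP a b c (w - a))
    (hn : SP a b c n) (hd : (a : ℤ) ∣ n - w) : w ≤ n := by
  obtain ⟨k, hk⟩ := hd
  by_contra hlt
  push_neg at hlt
  have hk1 : k ≤ -1 := by nlinarith [Int.natCast_pos.mpr ha]
  have : SP a b c (w - a) := by
    have := SP_nat_mul_a (-k - 1).toNat hn
    have he : n + ((-k - 1).toNat : ℤ) * a = w - a := by
      rw [Int.toNat_of_nonneg (by omega)]; linarith
    rwa [he] at this
  exact hw.2 this

lemma AP_unique (ha : 0 < a) {w w' : ℤ} (hw : SP a b c w ∧ ¬ SP a b c (w - a))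
    (hw' : SP a b c w' ∧ ¬ SP a b c (w' - a)) (hd : (a : ℤ) ∣ w - w') : w = w' := by
  have h1 := AP_min ha hw hw'.1 (dvd_sub_comm.mp hd)
  have h2 := AP_min ha hw' hw.1 hd
  omega

lemma canon (hc : 0 < c) (x y : ℕ) :
    ∃ x' y' : ℕ, x' < c ∧ (x : ℤ) * b + y * c = x' * b + y' * c := by
  refine ⟨x % c, y + (x / c) * b, Nat.mod_lt _ hc, ?_⟩
  have h : (x : ℤ) = c * (x / c) + x % c := by exact_mod_cast (Nat.div_add_mod x c).symm
  push_cast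
  linear_combination (b : ℤ) * h

lemma L1 (hbc : Nat.Coprime b c) (x x' : ℕ) (y y' : ℤ) (hx : x < c) (hx' : x' < c)
    (h : (x : ℤ) * b + y * c = x' * b + y' * c) : (x : ℤ) = x' ∧ y = y' := by
  have hco : IsCoprime (c : ℤ) (b : ℤ) := Nat.isCoprime_iff_coprime.mpr hbc.symm
  have hd : (c : ℤ) ∣ ((x : ℤ) - x') * b := ⟨y' - y, by linarith⟩
  obtain ⟨k, hk⟩ := hco.dvd_of_dvd_mul_right hd
  have hxb : (x : ℤ) < c := by exact_mod_cast hx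
  have hxb' : (x' : ℤ) < c := by exact_mod_cast hx'
  have hx0 : (0 : ℤ) ≤ x := Int.natCast_nonneg x
  have hx0' : (0 : ℤ) ≤ x' := Int.natCast_nonneg x'
  have hcpos : (0 : ℤ) < c := by
    have : 0 < c := lt_of_le_of_lt (Nat.zero_le x') hx'
    exact_mod_cast this
  have hk0 : k = 0 := by nlinarith
  rw [hk0, mul_zero] at hk
  have hxx : (x : ℤ) = x' := by omega
  refine ⟨hxx, ?_⟩
  have h2 : (y - y') * c = 0 := by linear_combination h - (b : ℤ) * hxx
  rcases mul_eq_zero.mp h2 with h' | h'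
  · linarith
  · linarith

lemma L1' (hbc : Nat.Coprime b c) (hc : 0 < c) {n : ℤ} (h : ∃ x y : ℕ, n = x * b + y * c)
    (x' : ℕ) (y' : ℤ) (hx' : x' < c) (hn : n = x' * b + y' * c) : 0 ≤ y' := by
  obtain ⟨x, y, rfl⟩ := h
  obtain ⟨x2, y2, hx2, heq⟩ := canon (b := b) hc x y
  obtain ⟨-, hy⟩ := L1 hbc x2 x' (y2 : ℤ) y' hx2 hx' (by linarith)
  rw [← hy]; positivity

lemma exists_xmod (hbc : Nat.Coprime b c) (hc : 1 < c) (n : ℤ) :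
    ∃ x : ℕ, x < c ∧ (c : ℤ) ∣ n - x * b := by
  haveI : NeZero c := ⟨by omega⟩
  set u : (ZMod c)ˣ := ZMod.unitOfCoprime b hbc with hu
  set g : ZMod c := (n : ZMod c) * ((u⁻¹ : (ZMod c)ˣ) : ZMod c) with hg
  refine ⟨g.val, g.val_lt, ?_⟩
  rw [← ZMod.intCast_zmod_eq_zero_iff_dvd]
  push_cast
  have hval : ((g.val : ℕ) : ZMod c) = g := ZMod.natCast_val g |>.trans (by simp)
  rw [hval]
  have hb : ((u : (ZMod c)ˣ) : ZMod c) = (b : ZMod c) := ZMod.coe_unitOfCoprime b hbc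
  rw [hg, ← hb]
  have : ((n : ZMod c) * ↑u⁻¹) * ↑u = (n : ZMod c) := by
    rw [mul_assoc, ← Units.val_mul, inv_mul_cancel u, Units.val_one, mul_one]
  rw [this]; ring

lemma sylvester (hbc : Nat.Coprime b c) (hc : 1 < c) (n : ℤ) :
    (∃ x y : ℕ, n = x * b + y * c) ∨
      (∃ x y : ℕ, (b : ℤ) * c - b - c - n = x * b + y * c) := by
  obtain ⟨x, hx, d, hd⟩ := exists_xmod hbc hc n
  by_cases hy : 0 ≤ d
  · exact Or.inl ⟨x, d.toNat, by rw [Int.toNat_of_nonneg hy]; linarith⟩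
  · push_neg at hy
    refine Or.inr ⟨c - 1 - x, (-d - 1).toNat, ?_⟩
    have hcast : ((c - 1 - x : ℕ) : ℤ) = (c : ℤ) - 1 - x := by
      have h1 : x + 1 ≤ c := hx
      have h2 : (x:ℤ) < c := by exact_mod_cast hx
      omega
    rw [Int.toNat_of_nonneg (by omega), hcast]
    linarith

set_option maxHeartbeats 2000000 in
theorem main (a b c F : ℕ) (ha : 1 < a) (hb : 1 < b) (hc : 1 < c)
    (hab : Nat.Coprime a b) (hac : Nat.Coprime a c) (hbc : Nat.Coprime b c)
    (h1 : ¬ ∃ x y : ℕ, (a : ℤ) = x * b + y * c)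
    (h2 : ¬ ∃ x y : ℕ, (b : ℤ) = x * a + y * c)
    (h3 : ¬ ∃ x y : ℕ, (c : ℤ) = x * a + y * b)
    (hF1 : ¬ SP a b c (F : ℤ))
    (hF2 : ∀ n : ℤ, (F : ℤ) < n → SP a b c n)
    (hsym : ∀ s : ℤ, SP a b c s ↔ ¬ SP a b c ((F : ℤ) - s)) : False := by
  classical
  have hapos : 0 < a := by omega
  have hcpos : 0 < c := by omega
  have haZ : (1 : ℤ) < a := by exact_mod_cast ha
  have hbZ : (1 : ℤ) < b := by exact_mod_cast hb
  have hcZ : (1 : ℤ) < c := by exact_mod_cast hc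
  -- M = F + a is an Apéry element
  have hMAp : SP a b c ((F:ℤ) + a) ∧ ¬ SP a b c ((F:ℤ) + a - a) := by
    constructor
    · exact hF2 _ (by linarith)
    · have he : (F:ℤ) + a - a = F := by ring
      rw [he]; exact hF1
  -- symmetry maps Apéry elements to Apéry elements
  have symAp : ∀ w : ℤ, (SP a b c w ∧ ¬ SP a b c (w - a)) →
      (SP a b c ((F:ℤ) + a - w) ∧ ¬ SP a b c ((F:ℤ) + a - w - a)) := by
    intro w hw
    constructor
    · by_contra hcon
      apply hw.2
      apply (hsym (w - a)).mpr
      intro hcc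
      apply hcon
      have he : (F:ℤ) + a - w = F - (w - a) := by ring
      rw [he]; exact hcc
    · have he : (F:ℤ) + a - w - a = F - w := by ring
      rw [he]
      exact (hsym w).mp hw.1
  -- Apéry elements have a-free representations
  have ApRep : ∀ w : ℤ, (SP a b c w ∧ ¬ SP a b c (w - a)) →
      ∃ x y : ℕ, w = x * b + y * c := by
    rintro w ⟨⟨x, y, z, hxyz⟩, hwn⟩
    match x with
    | 0 => exact ⟨y, z, by rw [hxyz]; push_cast; ring⟩
    | x + 1 =>
      exact absurd ⟨x, y, z, by rw [hxyz]; push_cast; ring⟩ hwn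
  -- canonical representation of M
  obtain ⟨x0', y0', hrep0⟩ := ApRep _ hMAp
  obtain ⟨X, Y, hXc, hMeq⟩ := canon (b := b) hcpos x0' y0'
  have hM : (F:ℤ) + a = X * b + Y * c := by rw [hrep0, hMeq]
  clear hrep0 hMeq x0' y0'
  -- box values are Apéry elements
  have boxAp : ∀ x y : ℕ, ((x ≤ X ∧ y ≤ Y) ∨ (X < x ∧ x < c ∧ y + b ≤ Y)) →
      (SP a b c ((x:ℤ) * b + y * c) ∧ ¬ SP a b c ((x:ℤ) * b + y * c - a)) := by
    intro x y hxy
    refine ⟨SP_bc x y, fun hS => hF1 ?_⟩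
    rcases hxy with ⟨hxX, hyY⟩ | ⟨hXx, hxc, hybY⟩
    · have key : (F:ℤ) = ((x:ℤ) * b + y * c - a) + (((X - x : ℕ):ℤ) * b + ((Y - y : ℕ):ℤ) * c) := by
        push_cast [Nat.cast_sub hxX, Nat.cast_sub hyY]
        linarith [hM]
      rw [key]
      exact SP_add hS (SP_bc (X - x) (Y - y))
    · have key : (F:ℤ) = ((x:ℤ) * b + y * c - a) + (((X + c - x : ℕ):ℤ) * b + ((Y - (y + b) : ℕ):ℤ) * c) := by
        push_cast [Nat.cast_sub (by omega : x ≤ X + c), Nat.cast_sub hybY]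
        linarith [hM]
      rw [key]
      exact SP_add hS (SP_bc (X + c - x) (Y - (y + b)))
  -- every Apéry element has a canonical representation of staircase shape
  have repShape : ∀ w : ℤ, (SP a b c w ∧ ¬ SP a b c (w - a)) →
      ∃ x y : ℕ, w = x * b + y * c ∧ x < c ∧ ((x ≤ X ∧ y ≤ Y) ∨ (X < x ∧ y + b ≤ Y)) := by
    intro w hw
    obtain ⟨x1, y1, hrep1⟩ := ApRep w hw
    obtain ⟨x, y, hxc', heq⟩ := canon (b := b) hcpos x1 y1
    have hwxy : w = (x:ℤ) * b + y * c := by rw [hrep1, heq]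
    have hMw := symAp w hw
    have hMwrep := ApRep _ hMw
    by_cases hxle : x ≤ X
    · have hyY : (y:ℤ) ≤ Y := by
        have h0 := L1' hbc hcpos hMwrep (X - x) ((Y:ℤ) - y)
          (by omega : X - x < c)
          (by push_cast [Nat.cast_sub hxle]; linarith [hM, hwxy])
        linarith
      exact ⟨x, y, hwxy, hxc', Or.inl ⟨hxle, by exact_mod_cast hyY⟩⟩
    · push_neg at hxle
      have hyY : (y:ℤ) + b ≤ Y := by
        have h0 := L1' hbc hcpos hMwrep (X + c - x) ((Y:ℤ) - y - b)
          (by omega : X + c - x < c)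
          (by push_cast [Nat.cast_sub (by omega : x ≤ X + c)]; linarith [hM, hwxy])
        linarith
      refine ⟨x, y, hwxy, hxc', Or.inr ⟨hxle, by exact_mod_cast hyY⟩⟩
  -- counting
  haveI : NeZero a := ⟨by omega⟩
  set D : Finset (ℕ × ℕ) := (Finset.range c ×ˢ Finset.range (Y+1)).filter
    (fun p => (p.1 ≤ X ∧ p.2 ≤ Y) ∨ (X < p.1 ∧ p.2 + b ≤ Y)) with hD
  have memD : ∀ p : ℕ × ℕ, p ∈ D ↔ (p.1 < c ∧ p.2 < Y + 1 ∧
      ((p.1 ≤ X ∧ p.2 ≤ Y) ∨ (X < p.1 ∧ p.2 + b ≤ Y))) := by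
    intro p
    simp only [hD, Finset.mem_filter, Finset.mem_product, Finset.mem_range]
    tauto
  have hcard : D.card = a := by
    have hbij : D.card = (Finset.univ : Finset (ZMod a)).card := by
      apply Finset.card_bij (fun p _ => ((p.1 : ZMod a) * b + (p.2 : ZMod a) * c))
      · intro p hp; exact Finset.mem_univ _
      · intro p hp q hq heq
        rw [memD] at hp hq
        have hApp := boxAp p.1 p.2 (by tauto)
        have hApq := boxAp q.1 q.2 (by tauto)
        have hdvd : (a:ℤ) ∣ (((p.1:ℤ) * b + p.2 * c) - ((q.1:ℤ) * b + q.2 * c)) := by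
          rw [← ZMod.intCast_zmod_eq_zero_iff_dvd]
          push_cast
          rw [sub_eq_zero]
          exact_mod_cast heq
        have hveq := AP_unique hapos hApp hApq hdvd
        obtain ⟨hx, hy⟩ := L1 hbc p.1 q.1 (p.2:ℤ) (q.2:ℤ) hp.1 hq.1 hveq
        have : p.1 = q.1 := by exact_mod_cast hx
        have : p.2 = q.2 := by exact_mod_cast hy
        exact Prod.ext (by exact_mod_cast hx) (by exact_mod_cast hy)
      · intro t _
        set n : ℤ := (t.val : ℤ) + a * (F+1) with hn
        have hnF : (F:ℤ) < n := by
          have h1' : (0:ℤ) ≤ t.val := Int.natCast_nonneg _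
          have h2' : (2:ℤ) ≤ a := by linarith
          have h3' : (0:ℤ) ≤ F := Int.natCast_nonneg _
          nlinarith
        obtain ⟨v, hvAp, hvd, -⟩ := L_desc hapos n.toNat n le_rfl (hF2 n hnF)
        obtain ⟨x, y, hvrep, hxc', hshape⟩ := repShape v hvAp
        refine ⟨(x, y), ?_, ?_⟩
        · rw [memD]
          refine ⟨hxc', by omega, hshape⟩
        · have e1 : ((x : ZMod a) * b + (y : ZMod a) * c) = (((v : ℤ) : ZMod a)) := by
            rw [hvrep]; push_cast; ring
          obtain ⟨k, hk⟩ := hvd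
          have e3 : ((v : ℤ) : ZMod a) = ((n : ℤ) : ZMod a) := by
            have hnv : n = v + (a:ℤ) * k := by linarith
            rw [hnv]; push_cast; simp
          have e2 : ((n : ℤ) : ZMod a) = t := by
            rw [hn]
            push_cast
            simp [ZMod.natCast_self, ZMod.natCast_val, ZMod.cast_id]
          rw [e1, e3, e2]
    rw [hbij, Finset.card_univ, ZMod.card]
  have hDcard : D.card = (X+1) * (Y+1) + (c - (X+1)) * (Y+1-b) := by
    have hsplit : D = (Finset.range (X+1) ×ˢ Finset.range (Y+1)) ∪
        (Finset.Ico (X+1) c ×ˢ Finset.range (Y+1-b)) := by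
      ext ⟨u, v⟩
      rw [memD]
      simp only [Finset.mem_union, Finset.mem_product, Finset.mem_range, Finset.mem_Ico]
      omega
    rw [hsplit, Finset.card_union_of_disjoint, Finset.card_product, Finset.card_product,
      Finset.card_range, Finset.card_range, Finset.card_range, Nat.card_Ico]
    · rw [Finset.disjoint_left]
      rintro ⟨u, v⟩ h1' h2'
      simp only [Finset.mem_product, Finset.mem_range, Finset.mem_Ico] at h1' h2'
      omega
  have key : a = (X+1) * (Y+1) + (c - (X+1)) * (Y+1-b) := by rw [← hDcard, hcard]
  by_cases hbY : b ≤ Y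
  · -- Case B : F = bc - b - c, contradiction via Sylvester and h1
    have hkeyZ : (a:ℤ) = ((X:ℤ)+1) * ((Y:ℤ)+1) + ((c:ℤ) - ((X:ℤ)+1)) * (((Y:ℤ)+1) - b) := by
      have h1c : X + 1 ≤ c := hXc
      have h2c : b ≤ Y + 1 := by omega
      rw [key]
      push_cast [Nat.cast_sub h1c, Nat.cast_sub h2c]
      ring
    have hFeq : (F:ℤ) = b * c - b - c := by linear_combination hM - hkeyZ
    rcases sylvester hbc hc (a : ℤ) with hl | hr
    · exact h1 hl
    · apply (hsym (a:ℤ)).mp SP_a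
      obtain ⟨x, y, hxy⟩ := hr
      refine ⟨0, x, y, ?_⟩
      push_cast
      rw [hFeq] at *
      linarith [hxy]
  · -- Case A
    push_neg at hbY
    have keyA : a = (X+1) * (Y+1) := by
      have : Y + 1 - b = 0 := by omega
      rw [key, this, Nat.mul_zero, Nat.add_zero]
    -- c is an Apéry element
    have hApc : SP a b c (c:ℤ) ∧ ¬ SP a b c ((c:ℤ) - a) := by
      refine ⟨⟨0, 0, 1, by push_cast; ring⟩, fun hS => ?_⟩
      obtain ⟨x, y, z, hxyz⟩ := hS
      rcases z with _ | z
      · exact h3 ⟨x + 1, y, by push_cast at hxyz ⊢; linarith⟩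
      · have hx0 : (0:ℤ) ≤ (x:ℤ) * a + (y:ℤ) * b := by positivity
        have hz0 : (0:ℤ) ≤ (z:ℤ) := Int.natCast_nonneg z
        push_cast at hxyz
        nlinarith
    -- b is an Apéry element
    have hApb : SP a b c (b:ℤ) ∧ ¬ SP a b c ((b:ℤ) - a) := by
      refine ⟨⟨0, 1, 0, by push_cast; ring⟩, fun hS => ?_⟩
      obtain ⟨x, y, z, hxyz⟩ := hS
      rcases y with _ | y
      · exact h2 ⟨x + 1, z, by push_cast at hxyz ⊢; linarith⟩
      · have hx0 : (0:ℤ) ≤ (x:ℤ) * a + (z:ℤ) * c := by positivity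
        have hy0 : (0:ℤ) ≤ (y:ℤ) := Int.natCast_nonneg y
        push_cast at hxyz
        nlinarith
    -- Y ≥ 1
    have hY1 : 1 ≤ Y := by
      obtain ⟨xc, yc, hcrep, hxcc, hcshape⟩ := repShape (c:ℤ) hApc
      obtain ⟨hx, hy⟩ := L1 hbc xc 0 (yc:ℤ) 1 hxcc hcpos (by push_cast; linarith [hcrep])
      have hyc1 : yc = 1 := by exact_mod_cast hy
      have hxc0 : xc = 0 := by exact_mod_cast hx
      rcases hcshape with ⟨-, h'⟩ | ⟨h', -⟩
      · omega
      · omega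
    -- X ≥ 1
    have hX1 : 1 ≤ X := by
      obtain ⟨xb, yb, hbrep, hxbc, hbshape⟩ := repShape (b:ℤ) hApb
      obtain ⟨hx, hy⟩ := L1 hbc xb 1 (yb:ℤ) 0 hxbc hc (by push_cast; linarith [hbrep])
      have hyb0 : yb = 0 := by exact_mod_cast hy
      have hxb1 : xb = 1 := by exact_mod_cast hx
      rcases hbshape with ⟨h', -⟩ | ⟨-, h'⟩
      · omega
      · omega
    -- first relation : (X+1) b = y0 c + k a with k ≥ 1, y0 ≤ Y
    have rel1 : ∃ (y0 : ℕ) (k : ℤ), y0 ≤ Y ∧ 1 ≤ k ∧ ((X:ℤ)+1) * b = y0 * c + k * a := by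
      have hSn : SP a b c (((X+1 : ℕ):ℤ) * b) := ⟨0, X+1, 0, by push_cast; ring⟩
      obtain ⟨v, hvAp, ⟨k, hk⟩, hvle⟩ := L_desc hapos _ _ le_rfl hSn
      obtain ⟨x2, y2, hvrep, hx2c, hshape2⟩ := repShape v hvAp
      have hbox : x2 ≤ X ∧ y2 ≤ Y := by
        rcases hshape2 with h' | h'
        · exact h'
        · omega
      have hk0 : 0 ≤ k := by
        have hapos' : (0:ℤ) < a := by linarith
        nlinarith
      have hkne : k ≠ 0 := by
        intro h0
        rw [h0, mul_zero] at hk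
        have hveq : v = ((X+1 : ℕ):ℤ) * b := by omega
        by_cases hXc1 : X + 1 < c
        · obtain ⟨hx, -⟩ := L1 hbc (X+1) x2 0 (y2:ℤ) hXc1 hx2c
            (by push_cast; push_cast at hveq; linarith [hvrep])
          have : X + 1 = x2 := by exact_mod_cast hx
          omega
        · have hXceq : X + 1 = c := by omega
          obtain ⟨-, hy⟩ := L1 hbc 0 x2 (b:ℤ) (y2:ℤ) hcpos hx2c
            (by push_cast; push_cast at hveq; rw [hvrep] at hveq;
                have : ((X:ℤ)+1) = c := by exact_mod_cast hXceq
                nlinarith [hveq])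
          have : b = y2 := by exact_mod_cast hy
          omega
      have hx20 : x2 = 0 := by
        by_contra hne
        have h1x : 1 ≤ x2 := Nat.one_le_iff_ne_zero.mpr hne
        have hApk := boxAp (X + 1 - x2) 0 (Or.inl ⟨by omega, Nat.zero_le _⟩)
        apply hApk.2
        refine ⟨(k-1).toNat, 0, y2, ?_⟩
        rw [Int.toNat_of_nonneg (by omega)]
        push_cast [Nat.cast_sub (by omega : x2 ≤ X + 1)]
        push_cast at hk
        rw [hvrep] at hk
        linarith
      refine ⟨y2, k, hbox.2, by omega, ?_⟩
      rw [hx20] at hvrep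
      push_cast at hk hvrep
      rw [hvrep] at hk
      linarith
    -- second relation : (Y+1) c = x1 b + l a with l ≥ 1, x1 ≤ X
    have rel2 : ∃ (x1 : ℕ) (l : ℤ), x1 ≤ X ∧ 1 ≤ l ∧ ((Y:ℤ)+1) * c = x1 * b + l * a := by
      have hSn : SP a b c (((Y+1 : ℕ):ℤ) * c) := ⟨0, 0, Y+1, by push_cast; ring⟩
      obtain ⟨v, hvAp, ⟨k, hk⟩, hvle⟩ := L_desc hapos _ _ le_rfl hSn
      obtain ⟨x2, y2, hvrep, hx2c, hshape2⟩ := repShape v hvAp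
      have hbox : x2 ≤ X ∧ y2 ≤ Y := by
        rcases hshape2 with h' | h'
        · exact h'
        · omega
      have hk0 : 0 ≤ k := by
        have hapos' : (0:ℤ) < a := by linarith
        nlinarith
      have hkne : k ≠ 0 := by
        intro h0
        rw [h0, mul_zero] at hk
        have hveq : v = ((Y+1 : ℕ):ℤ) * c := by omega
        obtain ⟨-, hy⟩ := L1 hbc 0 x2 (((Y:ℤ))+1) (y2:ℤ) hcpos hx2c
          (by push_cast; push_cast at hveq; rw [hvrep] at hveq; linarith)
        have : Y + 1 = y2 := by exact_mod_cast hy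
        omega
      have hy20 : y2 = 0 := by
        by_contra hne
        have h1y : 1 ≤ y2 := Nat.one_le_iff_ne_zero.mpr hne
        have hApk := boxAp 0 (Y + 1 - y2) (Or.inl ⟨Nat.zero_le _, by omega⟩)
        apply hApk.2
        refine ⟨(k-1).toNat, x2, 0, ?_⟩
        rw [Int.toNat_of_nonneg (by omega)]
        push_cast [Nat.cast_sub (by omega : y2 ≤ Y + 1)]
        push_cast at hk
        rw [hvrep] at hk
        linarith
      refine ⟨x2, k, hbox.1, by omega, ?_⟩
      rw [hy20] at hvrep
      push_cast at hk hvrep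
      rw [hvrep] at hk
      linarith
    -- combine
    obtain ⟨y0, k, hy0Y, hk1, hrel1⟩ := rel1
    obtain ⟨x1, l, hx1X, hl1, hrel2⟩ := rel2
    have hkeyZ : ((X:ℤ)+1) * ((Y:ℤ)+1) = a := by
      rw [keyA]; push_cast; ring
    have hdvd : (a:ℤ) ∣ ((a:ℤ) - y0 * x1) * (b * c) := by
      refine ⟨y0 * l * c + k * x1 * b + k * l * a, ?_⟩
      linear_combination ((Y:ℤ)+1) * (c:ℤ) * hrel1 + ((y0:ℤ) * c + k * a) * hrel2 - (b:ℤ) * (c:ℤ) * hkeyZ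
    have hcoab : IsCoprime (a:ℤ) (b:ℤ) := Nat.isCoprime_iff_coprime.mpr hab
    have hcoac : IsCoprime (a:ℤ) (c:ℤ) := Nat.isCoprime_iff_coprime.mpr hac
    have hdvd2 : (a:ℤ) ∣ ((a:ℤ) - y0 * x1) := (hcoab.mul_right hcoac).dvd_of_dvd_mul_right hdvd
    have hdvd3 : (a:ℤ) ∣ ((y0:ℤ) * x1) := by
      have := dvd_sub (dvd_refl (a:ℤ)) hdvd2
      simpa using this
    have hnatdvd : a ∣ y0 * x1 := by exact_mod_cast hdvd3
    have hlt : y0 * x1 < a := by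
      have h1' : y0 * x1 ≤ Y * X := Nat.mul_le_mul hy0Y hx1X
      have h2' : Y * X < (X+1) * (Y+1) := by nlinarith
      omega
    have h0 : y0 * x1 = 0 := Nat.eq_zero_of_dvd_of_lt hnatdvd hlt
    rcases Nat.mul_eq_zero.mp h0 with hy00 | hx10
    · have hdb : (a:ℤ) ∣ ((X:ℤ)+1) * b := ⟨k, by
        rw [hy00] at hrel1; push_cast at hrel1; linarith⟩
      have hdX : (a:ℤ) ∣ ((X:ℤ)+1) := hcoab.dvd_of_dvd_mul_right hdb
      have hdXn : a ∣ (X+1) := by exact_mod_cast hdX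
      have hle : a ≤ X + 1 := Nat.le_of_dvd (by omega) hdXn
      nlinarith [keyA]
    · have hdc : (a:ℤ) ∣ ((Y:ℤ)+1) * c := ⟨l, by
        rw [hx10] at hrel2; push_cast at hrel2; linarith⟩
      have hdY : (a:ℤ) ∣ ((Y:ℤ)+1) := hcoac.dvd_of_dvd_mul_right hdc
      have hdYn : a ∣ (Y+1) := by exact_mod_cast hdY
      have hle : a ≤ Y + 1 := Nat.le_of_dvd (by omega) hdYn
      nlinarith [keyA]

end Stmt15


theorem stmt15 (d1 d2 d3 : ℕ)
    (hd1 : 1 < d1) (hd2 : 1 < d2) (hd3 : 1 < d3)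
    (hc12 : Nat.Coprime d1 d2) (hc13 : Nat.Coprime d1 d3) (hc23 : Nat.Coprime d2 d3)
    (hmin1 : ¬ ∃ b c : ℕ, d1 = b * d2 + c * d3)
    (hmin2 : ¬ ∃ a c : ℕ, d2 = a * d1 + c * d3)
    (hmin3 : ¬ ∃ a b : ℕ, d3 = a * d1 + b * d2)
    (F : ℕ)
    (hF : IsGreatest {n : ℕ | ¬ ∃ a b c : ℕ, n = a * d1 + b * d2 + c * d3} F) :
    ¬ ∀ s : ℤ,
      (∃ a b c : ℕ, s = a * d1 + b * d2 + c * d3) ↔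
        ¬ ∃ a b c : ℕ, (F : ℤ) - s = a * d1 + b * d2 + c * d3 := by
  intro hsym
  have hF1 : ¬ Stmt15.SP d1 d2 d3 (F : ℤ) := by
    rintro ⟨x, y, z, h⟩
    exact hF.1 ⟨x, y, z, by exact_mod_cast h⟩
  have hF2 : ∀ n : ℤ, (F : ℤ) < n → Stmt15.SP d1 d2 d3 n := by
    intro n hn
    by_contra hS
    have hF0 : (0:ℤ) ≤ F := Int.natCast_nonneg F
    have hn0 : 0 ≤ n := by linarith
    have hnn : ((n.toNat : ℕ) : ℤ) = n := Int.toNat_of_nonneg hn0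
    have hmem : n.toNat ∈ {m : ℕ | ¬ ∃ a b c : ℕ, m = a * d1 + b * d2 + c * d3} := by
      rintro ⟨x, y, z, h⟩
      exact hS ⟨x, y, z, by rw [← hnn]; exact_mod_cast h⟩
    have := hF.2 hmem
    have : ((n.toNat : ℕ) : ℤ) ≤ (F : ℤ) := by exact_mod_cast this
    omega
  exact Stmt15.main d1 d2 d3 F hd1 hd2 hd3 hc12 hc13 hc23
    (fun ⟨x, y, h⟩ => hmin1 ⟨x, y, by exact_mod_cast h⟩)
    (fun ⟨x, y, h⟩ => hmin2 ⟨x, y, by exact_mod_cast h⟩)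
    (fun ⟨x, y, h⟩ => hmin3 ⟨x, y, by exact_mod_cast h⟩)
    hF1 hF2 hsym
end

section
/- For a symmetric numerical semigroup S(d1,d2,d3) minimally generated by three elements, the Frobenius number satisfies F(d1,d2,d3) ≥ 2*sqrt(d1*d2*d3) - (d1 + d2 + d3). -/
/-!
Let `S = ⟨d1, d2, d3⟩`, `T = ⟨d1, d2⟩` and `M = F + d3`. The Apéry set of `d3` in `S` (the least
element of `S` in each residue class mod `d3`) lies in `T`, and the symmetry of `S` makes it
invariant under `x ↦ M - x`. So there are `d3` elements `n ≤ M` of `T`, pairwise incongruent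
mod `d3`, with `M - n ∈ T`. Write `d1 = m g`, `d2 = m' g` with `m, m'` coprime; every element of
`T` is uniquely `a d1 + b d2` with `b < m`. If `M = A d1 + B d2` in this form, the coefficients of
such an `n` satisfy `a ≤ A, b ≤ B` or `a ≤ A - m', B < b`, so
`d3 ≤ (A + 1)(B + 1) + (A + 1 - m')(m - B - 1)`, and AM-GM turns this into
`4 d1 d2 d3 ≤ ((A + 1) d1 + (B + 1) d2)² = (F + d1 + d2 + d3)²`.
-/

open Finset

def span₂ (d₁ d₂ : ℕ) : Set ℕ := {n | ∃ a b : ℕ, n = a * d₁ + b * d₂}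

def span₃ (d₁ d₂ d₃ : ℕ) : Set ℕ := {n | ∃ a b c : ℕ, n = a * d₁ + b * d₂ + c * d₃}

def aperySet (S : Set ℕ) (d : ℕ) : Set ℕ := {x | x ∈ S ∧ ∀ k ∈ S, k + d ≠ x}

section Apery

variable {S : Set ℕ} {d F x : ℕ}

theorem exists_mem_aperySet_mod_eq (hd : 0 < d) (hS : ∀ n, F < n → n ∈ S) (r : ℕ) :
    ∃ x ∈ aperySet S d, x % d = r % d := by
  classical
  have hex : ∃ n, n ∈ S ∧ n % d = r % d :=
    ⟨(F + 1) * d + r, hS _ (by nlinarith), by simp [Nat.add_mod]⟩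
  refine ⟨Nat.find hex, ⟨(Nat.find_spec hex).1, fun k hk hkx => ?_⟩, (Nat.find_spec hex).2⟩
  refine Nat.find_min hex (by omega : k < Nat.find hex) ⟨hk, ?_⟩
  rw [← (Nat.find_spec hex).2, ← hkx, Nat.add_mod_right]

theorem le_add_of_mem_aperySet (hS : ∀ n, F < n → n ∈ S) (hx : x ∈ aperySet S d) :
    x ≤ F + d := by
  by_contra! h
  exact hx.2 (x - d) (hS _ (by omega)) (by omega)

theorem sub_mem_aperySet (hS : ∀ n, F < n → n ∈ S) (hsymm : ∀ n ≤ F, n ∈ S ↔ F - n ∉ S)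
    (hx : x ∈ aperySet S d) : F + d - x ∈ aperySet S d := by
  have hxF := le_add_of_mem_aperySet hS hx
  refine ⟨?_, fun k hk hkx => ?_⟩
  · rcases lt_or_ge x d with hxd | hxd
    · exact hS _ (by omega)
    · have hk : x - d ∉ S := fun hk => hx.2 _ hk (by omega)
      by_contra hy
      exact hk ((hsymm (x - d) (by omega)).2 (by rwa [show F - (x - d) = F + d - x by omega]))
  · have hxF' : x ≤ F := by omega
    exact (hsymm x hxF').1 hx.1 (by rwa [show F - x = k by omega])

end Apery

theorem aperySet_span₃_subset_span₂ {d₁ d₂ d₃ : ℕ} :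
    aperySet (span₃ d₁ d₂ d₃) d₃ ⊆ span₂ d₁ d₂ := by
  rintro x ⟨⟨a, b, c, rfl⟩, hx⟩
  cases c with
  | zero => exact ⟨a, b, by ring⟩
  | succ c => exact absurd (by ring) (hx _ ⟨a, b, c, rfl⟩)

section TwoGenerators

variable {g m m' : ℕ}

theorem exists_eq_and_lt_of_mem_span₂ (hm : 0 < m) {n : ℕ} (hn : n ∈ span₂ (m * g) (m' * g)) :
    ∃ a b, b < m ∧ n = a * (m * g) + b * (m' * g) := by
  obtain ⟨a, b, rfl⟩ := hn
  refine ⟨a + b / m * m', b % m, Nat.mod_lt b hm, ?_⟩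
  conv_lhs => rw [← Nat.div_add_mod b m]
  ring

theorem add_eq_or_add_eq_add (hg : 0 < g) (hcop : m.Coprime m') {a b a' b' A B : ℕ}
    (hb : b < m) (hb' : b' < m) (hB : B < m)
    (h : a * (m * g) + b * (m' * g) + (a' * (m * g) + b' * (m' * g)) = A * (m * g) + B * (m' * g)) :
    (a + a' = A ∧ b + b' = B) ∨ (a + a' + m' = A ∧ b + b' = B + m) := by
  have hz : ((b : ℤ) + b' - B) * m' = ((A : ℤ) - a - a') * m := by
    apply mul_right_cancel₀ (show (g : ℤ) ≠ 0 by positivity)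
    zify at h
    linear_combination h
  obtain ⟨k, hk⟩ : (m : ℤ) ∣ (b : ℤ) + b' - B :=
    hcop.isCoprime.dvd_of_dvd_mul_right ⟨_, hz.trans (mul_comm _ _)⟩
  have hmk : (A : ℤ) - a - a' = k * m' := by
    apply mul_left_cancel₀ (show (m : ℤ) ≠ 0 by omega)
    linear_combination (m' : ℤ) * hk - hz
  have hk01 : k = 0 ∨ k = 1 := by
    have : 0 ≤ k := by nlinarith
    have : k < 2 := by nlinarith
    omega
  rcases hk01 with rfl | rfl
  · left; constructor <;> linarith
  · right; constructor <;> linarith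

/-- The coefficients `(a, b)`, `b < m`, of the `n` with `n` and `M - n` in `span₂ (m g) (m' g)`,
where `M = A (m g) + B (m' g)` with `B < m`. -/
def coeffBox (m m' A B : ℕ) : Finset (ℕ × ℕ) :=
  range (A + 1) ×ˢ range (B + 1) ∪ range (A + 1 - m') ×ˢ Ico (B + 1) m

theorem card_coeffBox (A B : ℕ) :
    (coeffBox m m' A B).card = (A + 1) * (B + 1) + (A + 1 - m') * (m - (B + 1)) := by
  rw [coeffBox, card_union_of_disjoint]
  · simp only [card_product, card_range, Nat.card_Ico]
  · rw [disjoint_left]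
    rintro ⟨a, b⟩ h₁ h₂
    simp only [mem_product, mem_range, mem_Ico] at h₁ h₂
    omega

theorem mem_image_coeffBox (hg : 0 < g) (hcop : m.Coprime m') {A B M n : ℕ} (hB : B < m)
    (hM : M = A * (m * g) + B * (m' * g)) (hnM : n ≤ M) (hn : n ∈ span₂ (m * g) (m' * g))
    (hMn : M - n ∈ span₂ (m * g) (m' * g)) :
    n ∈ (coeffBox m m' A B).image fun p => p.1 * (m * g) + p.2 * (m' * g) := by
  obtain ⟨a, b, hb, rfl⟩ := exists_eq_and_lt_of_mem_span₂ (by omega) hn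
  obtain ⟨a', b', hb', hab'⟩ := exists_eq_and_lt_of_mem_span₂ (by omega) hMn
  refine mem_image.2 ⟨(a, b), ?_, rfl⟩
  simp only [coeffBox, mem_union, mem_product, mem_range, mem_Ico]
  have hsum : a * (m * g) + b * (m' * g) + (a' * (m * g) + b' * (m' * g)) =
      A * (m * g) + B * (m' * g) := by
    rw [← hab', ← hM]; omega
  rcases add_eq_or_add_eq_add hg hcop hb hb' hB hsum with ⟨hA, hB⟩ | ⟨hA, hB⟩ <;> omega

theorem le_card_coeffBox (hg : 0 < g) (hcop : m.Coprime m') {A B M d : ℕ} (hB : B < m)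
    (hM : M = A * (m * g) + B * (m' * g))
    (h : ∀ r < d, ∃ n ≤ M, n ∈ span₂ (m * g) (m' * g) ∧ M - n ∈ span₂ (m * g) (m' * g) ∧
      n % d = r) :
    d ≤ (coeffBox m m' A B).card := by
  set s := (coeffBox m m' A B).image fun p => p.1 * (m * g) + p.2 * (m' * g)
  have hsurj : Set.SurjOn (· % d) s (range d) := by
    intro r hr
    obtain ⟨n, hnM, hn, hMn, rfl⟩ := h r (mem_range.1 hr)
    exact ⟨n, mem_image_coeffBox hg hcop hB hM hnM hn hMn, rfl⟩
  calc d = (range d).card := (card_range d).symm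
    _ ≤ s.card := card_le_card_of_surjOn _ hsurj
    _ ≤ (coeffBox m m' A B).card := card_image_le

end TwoGenerators

theorem four_mul_le_sq_of_le_card_coeffBox (g : ℕ) {m m' A B d : ℕ} (hB : B < m)
    (hd : d ≤ (coeffBox m m' A B).card) :
    4 * (m * g * (m' * g) * d) ≤ ((A + 1) * (m * g) + (B + 1) * (m' * g)) ^ 2 := by
  rw [card_coeffBox] at hd
  rcases le_or_gt (A + 1) m' with hA | hA
  · rw [Nat.sub_eq_zero_of_le hA, zero_mul, add_zero] at hd
    nlinarith [sq_nonneg (((A:ℤ) + 1) * (m * g) - ((B:ℤ) + 1) * (m' * g))]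
  · zify [hA.le, Nat.succ_le_of_lt hB] at hd ⊢
    nlinarith [sq_nonneg ((g : ℤ) * (m * (A + 1) + m' * (B + 1) - 2 * m * m')),
      mul_le_mul_of_nonneg_left hd (by positivity : (0 : ℤ) ≤ 4 * (m * g * (m' * g)))]

theorem two_mul_sqrt_le {x y : ℝ} (hy : 0 ≤ y) (h : 4 * x ≤ y ^ 2) : 2 * √x ≤ y := by
  rcases le_or_gt 0 x with hx | hx
  · nlinarith [Real.sq_sqrt hx, Real.sqrt_nonneg x]
  · rw [Real.sqrt_eq_zero'.2 hx.le]; linarith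

theorem stmt18_general (d1 d2 d3 : ℕ)
    (hd1 : 1 < d1) (h23 : d2 < d3)
    (F : ℕ)
    (hF : IsGreatest {n : ℕ | ¬ ∃ a b c : ℕ, n = a * d1 + b * d2 + c * d3} F)
    (hsym : ∀ s : ℤ,
      (∃ a b c : ℕ, s = a * d1 + b * d2 + c * d3) ↔
        ¬ ∃ a b c : ℕ, (F : ℤ) - s = a * d1 + b * d2 + c * d3) :
    2 * Real.sqrt ((d1 : ℝ) * d2 * d3) - ((d1 : ℝ) + d2 + d3) ≤ (F : ℝ) := by
  have hd3 : 0 < d3 := by omega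
  have hS : ∀ n, F < n → n ∈ span₃ d1 d2 d3 := fun n hn => by_contra fun h => (hF.2 h).not_gt hn
  have hsymm : ∀ n ≤ F, n ∈ span₃ d1 d2 d3 ↔ F - n ∉ span₃ d1 d2 d3 := fun n hn => by
    have h := hsym n
    rw [← Nat.cast_sub hn] at h
    exact_mod_cast h
  have h0 : 0 ∈ aperySet (span₃ d1 d2 d3) d3 := ⟨⟨0, 0, 0, by ring⟩, fun k _ hk => by omega⟩
  have hM : F + d3 ∈ span₂ d1 d2 := by
    simpa using aperySet_span₃_subset_span₂ (sub_mem_aperySet hS hsymm h0)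
  obtain ⟨g, m, m', hg, hcop, rfl, rfl⟩ :=
    Nat.exists_coprime' (Nat.gcd_pos_of_pos_left d2 (by omega : 0 < d1))
  have hm : 0 < m := Nat.pos_of_ne_zero (by rintro rfl; omega)
  obtain ⟨A, B, hB, hAB⟩ := exists_eq_and_lt_of_mem_span₂ hm hM
  have hcard : d3 ≤ (coeffBox m m' A B).card := le_card_coeffBox hg hcop hB hAB fun r hr => by
    obtain ⟨x, hx, hxr⟩ := exists_mem_aperySet_mod_eq hd3 hS r
    exact ⟨x, le_add_of_mem_aperySet hS hx, aperySet_span₃_subset_span₂ hx,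
      aperySet_span₃_subset_span₂ (sub_mem_aperySet hS hsymm hx),
      by rwa [Nat.mod_eq_of_lt hr] at hxr⟩
  have key : 4 * (m * g * (m' * g) * d3) ≤ (F + m * g + m' * g + d3) ^ 2 := by
    convert four_mul_le_sq_of_le_card_coeffBox g hB hcard using 2
    rw [add_mul, add_mul]; omega
  have := two_mul_sqrt_le (by positivity) (by exact_mod_cast key :
    (4 : ℝ) * (↑(m * g) * ↑(m' * g) * d3) ≤ (F + ↑(m * g) + ↑(m' * g) + d3) ^ 2)
  linarith

theorem stmt18 (d1 d2 d3 : ℕ)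
    (hd1 : 1 < d1) (h12 : d1 < d2) (h23 : d2 < d3)
    (hgcd : Nat.gcd d1 (Nat.gcd d2 d3) = 1)
    (hmin1 : ¬ ∃ b c : ℕ, d1 = b * d2 + c * d3)
    (hmin2 : ¬ ∃ a c : ℕ, d2 = a * d1 + c * d3)
    (hmin3 : ¬ ∃ a b : ℕ, d3 = a * d1 + b * d2)
    (F : ℕ)
    (hF : IsGreatest {n : ℕ | ¬ ∃ a b c : ℕ, n = a * d1 + b * d2 + c * d3} F)
    (hsym : ∀ s : ℤ,
      (∃ a b c : ℕ, s = a * d1 + b * d2 + c * d3) ↔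
        ¬ ∃ a b c : ℕ, (F : ℤ) - s = a * d1 + b * d2 + c * d3) :
    2 * Real.sqrt ((d1 : ℝ) * d2 * d3) - ((d1 : ℝ) + d2 + d3) ≤ (F : ℝ) :=
  stmt18_general d1 d2 d3 hd1 h23 F hF hsym
end
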